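/- arXiv:1811.07971 — 10 statements merged into one kernel-verified Lean document; each statement's English description precedes it below -/
import Mathlib

section
/- Let X₁,...,Xₙ be independent random variables taking values in [0,1], and let S = ∑ᵢ Xᵢ. Then 1/(1 + E[S]) ≤ E[1/(1 + S)] ≤ (1 - exp(-E[S]))/E[S] ≤ 1/E[S]. -/
/-!
The lower bound is Jensen's inequality for the convex function `x ↦ 1/(1+x)`. For the upper bound,
write `1/(1+S) = ∫₀¹ t^S dt` and exchange the integrals. By independence `E[t^S] = ∏ E[t^Xᵢ]`, and
`t^x ≤ 1 + (t-1)x ≤ exp((t-1)x)` for `x ∈ [0,1]` gives `E[t^Xᵢ] ≤ exp((t-1)E[Xᵢ])`. Hence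
`E[1/(1+S)] ≤ ∫₀¹ exp((t-1)E[S]) dt = (1 - exp(-E[S]))/E[S]`.
-/

open MeasureTheory ProbabilityTheory Real Set

lemma rpow_le_sub_one_mul_add_one {t x : ℝ} (ht : 0 ≤ t) (hx₀ : 0 ≤ x) (hx₁ : x ≤ 1) :
    t ^ x ≤ (t - 1) * x + 1 := by
  have h := geom_mean_le_arith_mean2_weighted hx₀ (sub_nonneg.2 hx₁) ht zero_le_one (by ring)
  rw [one_rpow, mul_one] at h
  linarith

lemma integral_exp_sub_one_mul {m : ℝ} (hm : m ≠ 0) :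
    ∫ t in (0 : ℝ)..1, exp ((t - 1) * m) = (1 - exp (-m)) / m := by
  have := intervalIntegral.integral_comp_mul_sub (a := 0) (b := 1) exp hm m
  simp only [mul_zero, zero_sub, mul_one, sub_self, integral_exp, exp_zero] at this
  rw [show (fun t : ℝ => exp ((t - 1) * m)) = fun t => exp (m * t - m) by ext; ring_nf, this,
    smul_eq_mul, inv_mul_eq_div]

lemma one_div_one_add_eq_integral_rpow {x : ℝ} (hx : -1 < x) :
    1 / (1 + x) = ∫ t in (0 : ℝ)..1, t ^ x := by
  rw [integral_rpow (.inl hx), one_rpow, zero_rpow (by linarith), sub_zero, add_comm]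

lemma convexOn_one_div_one_add : ConvexOn ℝ (Ici 0) fun x : ℝ => 1 / (1 + x) := by
  have h : Ici (0 : ℝ) ⊆ (fun x => 1 + x) ⁻¹' Ioi 0 := fun x (hx : 0 ≤ x) => by
    simp only [mem_preimage, mem_Ioi]; linarith
  simpa [Function.comp_def] using
    ((convexOn_zpow (𝕜 := ℝ) (-1)).translate_right 1).subset h (convex_Ici 0)

section

variable {Ω : Type*} [MeasurableSpace Ω] {μ : Measure Ω}

lemma one_div_one_add_integral_le_integral [IsProbabilityMeasure μ] {S : Ω → ℝ}
    (hS : Integrable S μ) (hS₀ : ∀ᵐ ω ∂μ, 0 ≤ S ω) :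
    1 / (1 + ∫ ω, S ω ∂μ) ≤ ∫ ω, 1 / (1 + S ω) ∂μ := by
  refine convexOn_one_div_one_add.map_integral_le ?_ isClosed_Ici hS₀ hS ?_
  · exact fun x (hx : 0 ≤ x) => by fun_prop (disch := linarith)
  · refine Integrable.of_mem_Icc 0 1 (by fun_prop) ?_
    filter_upwards [hS₀] with ω hω
    have : 0 < 1 + S ω := by linarith
    exact ⟨one_div_nonneg.2 this.le, div_le_one_of_le₀ (by linarith) this.le⟩

lemma integral_one_div_one_add_le_of_integral_rpow_le [IsFiniteMeasure μ] {S : Ω → ℝ} {m : ℝ}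
    (hS : Measurable S) (hS₀ : ∀ ω, 0 ≤ S ω) (hm : m ≠ 0)
    (h : ∀ t ∈ Ioc (0 : ℝ) 1, ∫ ω, t ^ S ω ∂μ ≤ exp ((t - 1) * m)) :
    ∫ ω, 1 / (1 + S ω) ∂μ ≤ (1 - exp (-m)) / m := by
  have hmem : ∀ᵐ p ∂μ.prod (volume.restrict (Ioc (0 : ℝ) 1)), p.2 ∈ Ioc (0 : ℝ) 1 :=
    Measure.quasiMeasurePreserving_snd.ae (ae_restrict_mem measurableSet_Ioc)
  have hF : Integrable (fun p : Ω × ℝ => p.2 ^ S p.1) (μ.prod (volume.restrict (Ioc 0 1))) := by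
    refine Integrable.of_mem_Icc 0 1 (by fun_prop) ?_
    filter_upwards [hmem] with p hp
    exact ⟨rpow_nonneg hp.1.le _, rpow_le_one hp.1.le hp.2 (hS₀ _)⟩
  calc ∫ ω, 1 / (1 + S ω) ∂μ = ∫ ω, (∫ t in Ioc (0 : ℝ) 1, t ^ S ω) ∂μ := by
        congr with ω
        rw [one_div_one_add_eq_integral_rpow (by linarith [hS₀ ω]),
          intervalIntegral.integral_of_le zero_le_one]
    _ = ∫ t in Ioc 0 1, ∫ ω, t ^ S ω ∂μ := integral_integral_swap hF
    _ ≤ ∫ t in Ioc 0 1, exp ((t - 1) * m) :=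
        setIntegral_mono_on hF.integral_prod_right (by fun_prop : Continuous _).integrableOn_Ioc
          measurableSet_Ioc h
    _ = (1 - exp (-m)) / m := by
        rw [← intervalIntegral.integral_of_le zero_le_one, integral_exp_sub_one_mul hm]

lemma mgf_log_le_exp_of_mem_Icc [IsProbabilityMeasure μ] {X : Ω → ℝ} (hX : Measurable X)
    (hval : ∀ ω, X ω ∈ Icc 0 1) {t : ℝ} (ht : 0 < t) :
    mgf X μ (log t) ≤ exp ((t - 1) * ∫ ω, X ω ∂μ) := by
  have hXi : Integrable X μ := .of_mem_Icc 0 1 hX.aemeasurable (ae_of_all _ hval)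
  calc mgf X μ (log t) = ∫ ω, t ^ X ω ∂μ := by simp only [mgf, rpow_def_of_pos ht]
    _ ≤ ∫ ω, ((t - 1) * X ω + 1) ∂μ :=
        integral_mono_of_nonneg (ae_of_all _ fun ω => rpow_nonneg ht.le _)
          ((hXi.const_mul _).add (integrable_const 1))
          (ae_of_all _ fun ω => rpow_le_sub_one_mul_add_one ht.le (hval ω).1 (hval ω).2)
    _ = (t - 1) * ∫ ω, X ω ∂μ + 1 := by
        rw [integral_add (hXi.const_mul _) (integrable_const 1), integral_const_mul,
          integral_const, probReal_univ, one_smul]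
    _ ≤ exp ((t - 1) * ∫ ω, X ω ∂μ) := add_one_le_exp _

lemma ProbabilityTheory.iIndepFun.integral_rpow_sum_le_exp {ι : Type*} {X : ι → Ω → ℝ}
    (hindep : iIndepFun X μ) (hX : ∀ i, Measurable (X i)) (hval : ∀ i ω, X i ω ∈ Icc 0 1)
    (s : Finset ι) {t : ℝ} (ht : 0 < t) :
    ∫ ω, t ^ (∑ i ∈ s, X i ω) ∂μ ≤ exp ((t - 1) * ∫ ω, ∑ i ∈ s, X i ω ∂μ) := by
  have := hindep.isProbabilityMeasure
  have hXi (i : ι) : Integrable (X i) μ :=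
    .of_mem_Icc 0 1 (hX i).aemeasurable (ae_of_all _ (hval i))
  calc ∫ ω, t ^ (∑ i ∈ s, X i ω) ∂μ = mgf (∑ i ∈ s, X i) μ (log t) := by
        simp only [mgf, rpow_def_of_pos ht, Finset.sum_apply]
    _ = ∏ i ∈ s, mgf (X i) μ (log t) := hindep.mgf_sum hX s
    _ ≤ ∏ i ∈ s, exp ((t - 1) * ∫ ω, X i ω ∂μ) :=
        Finset.prod_le_prod (fun _ _ => mgf_nonneg) fun i _ =>
          mgf_log_le_exp_of_mem_Icc (hX i) (hval i) ht
    _ = exp ((t - 1) * ∫ ω, ∑ i ∈ s, X i ω ∂μ) := by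
        rw [← exp_sum, ← Finset.mul_sum, integral_finsetSum _ fun i _ => hXi i]

end

/-- Let `X₁, …, Xₙ` be independent random variables with values in `[0,1]` and
`S = ∑ᵢ Xᵢ` with `E[S] > 0`.  Then
`1/(1 + E[S]) ≤ E[1/(1 + S)] ≤ (1 - exp (-E[S]))/E[S] ≤ 1/E[S]`. -/
theorem stmt1 {Ω : Type*} [MeasurableSpace Ω] (μ : Measure Ω) [IsProbabilityMeasure μ]
    (n : ℕ) (X : Fin n → Ω → ℝ)
    (hmeas : ∀ i, Measurable (X i))
    (hval : ∀ i ω, X i ω ∈ Set.Icc (0 : ℝ) 1)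
    (hindep : iIndepFun X μ)
    (hpos : 0 < ∫ ω, (∑ i, X i ω) ∂μ) :
    1 / (1 + ∫ ω, (∑ i, X i ω) ∂μ) ≤ ∫ ω, 1 / (1 + ∑ i, X i ω) ∂μ ∧
    (∫ ω, 1 / (1 + ∑ i, X i ω) ∂μ) ≤
      (1 - Real.exp (-(∫ ω, (∑ i, X i ω) ∂μ))) / (∫ ω, (∑ i, X i ω) ∂μ) ∧
    (1 - Real.exp (-(∫ ω, (∑ i, X i ω) ∂μ))) / (∫ ω, (∑ i, X i ω) ∂μ) ≤
      1 / (∫ ω, (∑ i, X i ω) ∂μ) := by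
  have hS₀ (ω : Ω) : 0 ≤ ∑ i, X i ω := Finset.sum_nonneg fun i _ => (hval i ω).1
  have hSi : Integrable (fun ω => ∑ i, X i ω) μ := integrable_finsetSum _ fun i _ =>
    .of_mem_Icc 0 1 (hmeas i).aemeasurable (ae_of_all _ (hval i))
  refine ⟨one_div_one_add_integral_le_integral hSi (ae_of_all _ hS₀),
    integral_one_div_one_add_le_of_integral_rpow_le (by fun_prop) hS₀ hpos.ne' fun t ht =>
      hindep.integral_rpow_sum_le_exp hmeas hval _ ht.1, ?_⟩
  exact div_le_div_of_nonneg_right (by linarith [exp_pos (-∫ ω, ∑ i, X i ω ∂μ)]) hpos.le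
end

section
/- Let X and Y be random variables on a common measurable space. Suppose there exist ε, δ > 0 such that for every measurable event A there is a joint coupling of (X,Y) and an event G with Pr[G] ≥ 1 - δ satisfying e^{-ε}·Pr[Y ∈ A | G] ≤ Pr[X ∈ A | G] ≤ e^{ε}·Pr[Y ∈ A | G]. Then for every measurable A: e^{-ε}(Pr[Y ∈ A] - δ) ≤ Pr[X ∈ A] ≤ e^{ε}·Pr[Y ∈ A] + δ. -/
open MeasureTheory ProbabilityTheory

/-!
Conditioning on `G` only rescales probabilities of events inside `G` by `P G`, so a
multiplicative bound between `P[E | G]` and `P[F | G]` is a bound between `P (G ∩ E)` and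
`P (G ∩ F)`. Passing from `G ∩ E` to `E` costs at most `P Gᶜ ≤ δ`. The lower bound is the upper
bound with the roles of `X` and `Y` exchanged.
-/

section ConditionalBound

variable {Ω : Type*} [MeasurableSpace Ω] {P : Measure Ω} [IsFiniteMeasure P] {G : Set Ω}

lemma measureReal_cond_mul_eq_inter (hG : MeasurableSet G) (E : Set Ω) :
    (P[|G]).real E * P.real G = P.real (G ∩ E) := by
  simp only [measureReal_def, ← ENNReal.toReal_mul, cond_mul_eq_inter hG E P]

lemma measureReal_le_inter_add_compl (E : Set Ω) :
    P.real E ≤ P.real (G ∩ E) + P.real Gᶜ :=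
  calc P.real E ≤ P.real (G ∩ E ∪ Gᶜ) :=
        measureReal_mono fun ω hω ↦ (em (ω ∈ G)).imp (⟨·, hω⟩) id
    _ ≤ P.real (G ∩ E) + P.real Gᶜ := measureReal_union_le _ _

lemma measureReal_le_mul_add_of_cond_le {E F : Set Ω} {c δ : ℝ} (hc : 0 ≤ c)
    (hG : MeasurableSet G) (hGc : P.real Gᶜ ≤ δ) (h : (P[|G]).real E ≤ c * (P[|G]).real F) :
    P.real E ≤ c * P.real F + δ :=
  calc P.real E ≤ (P[|G]).real E * P.real G + P.real Gᶜ := by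
        rw [measureReal_cond_mul_eq_inter hG]; exact measureReal_le_inter_add_compl E
    _ ≤ c * ((P[|G]).real F * P.real G) + δ := by
        rw [← mul_assoc]; gcongr
    _ ≤ c * P.real F + δ := by
        rw [measureReal_cond_mul_eq_inter hG]
        gcongr c * ?_ + δ
        exact measureReal_mono Set.inter_subset_right

end ConditionalBound

theorem stmt3_general {α : Type*} [MeasurableSpace α]
    (μX μY : Measure α) [IsProbabilityMeasure μX] [IsProbabilityMeasure μY]
    (ε δ : ℝ)
    (hcoup : ∀ A : Set α, MeasurableSet A →
      ∃ (Ω : Type) (_ : MeasurableSpace Ω) (P : Measure Ω) (_ : IsProbabilityMeasure P)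
        (X Y : Ω → α) (_ : Measurable X) (_ : Measurable Y)
        (G : Set Ω) (_ : MeasurableSet G),
        P.map X = μX ∧ P.map Y = μY ∧ (1 - δ : ℝ) ≤ (P G).toReal ∧
        Real.exp (-ε) * ((P[|G]) (Y ⁻¹' A)).toReal ≤ ((P[|G]) (X ⁻¹' A)).toReal ∧
        ((P[|G]) (X ⁻¹' A)).toReal ≤ Real.exp ε * ((P[|G]) (Y ⁻¹' A)).toReal) :
    ∀ A : Set α, MeasurableSet A →
      Real.exp (-ε) * ((μY A).toReal - δ) ≤ (μX A).toReal ∧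
      (μX A).toReal ≤ Real.exp ε * (μY A).toReal + δ := by
  intro A hA
  obtain ⟨Ω, _, P, _, X, Y, hX, hY, G, hG, rfl, rfl, hPG, hlow, hhigh⟩ := hcoup A hA
  simp only [← measureReal_def, map_measureReal_apply hX hA, map_measureReal_apply hY hA]
    at hPG hlow hhigh ⊢
  have hGc : P.real Gᶜ ≤ δ := by linarith [probReal_compl_eq_one_sub (μ := P) hG]
  have hYX : (P[|G]).real (Y ⁻¹' A) ≤ Real.exp ε * (P[|G]).real (X ⁻¹' A) := by
    rw [← mul_inv_cancel_left₀ (Real.exp_ne_zero ε) ((P[|G]).real (Y ⁻¹' A)), ← Real.exp_neg]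
    gcongr
  refine ⟨?_, measureReal_le_mul_add_of_cond_le (Real.exp_pos ε).le hG hGc hhigh⟩
  calc Real.exp (-ε) * (P.real (Y ⁻¹' A) - δ)
      ≤ Real.exp (-ε) * (Real.exp ε * P.real (X ⁻¹' A)) := by
        gcongr; linarith [measureReal_le_mul_add_of_cond_le (Real.exp_pos ε).le hG hGc hYX]
    _ = P.real (X ⁻¹' A) := by rw [Real.exp_neg, inv_mul_cancel_left₀ (Real.exp_ne_zero ε)]

/-- Let `μX` and `μY` be the distributions of random variables `X`, `Y` on a common
measurable space `α`.  Suppose there are `ε, δ > 0` such that for every measurable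
event `A` there is a coupling `(X', Y')` of `(μX, μY)` and an event `G` with
`Pr[G] ≥ 1 - δ` such that
`e^{-ε}·Pr[Y' ∈ A | G] ≤ Pr[X' ∈ A | G] ≤ e^{ε}·Pr[Y' ∈ A | G]`.
Then for every measurable `A`:
`e^{-ε}(Pr[Y ∈ A] - δ) ≤ Pr[X ∈ A] ≤ e^{ε}·Pr[Y ∈ A] + δ`. -/
theorem stmt3 {α : Type*} [MeasurableSpace α]
    (μX μY : Measure α) [IsProbabilityMeasure μX] [IsProbabilityMeasure μY]
    (ε δ : ℝ) (hε : 0 < ε) (hδ : 0 < δ)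
    (hcoup : ∀ A : Set α, MeasurableSet A →
      ∃ (Ω : Type) (_ : MeasurableSpace Ω) (P : Measure Ω) (_ : IsProbabilityMeasure P)
        (X Y : Ω → α) (_ : Measurable X) (_ : Measurable Y)
        (G : Set Ω) (_ : MeasurableSet G),
        P.map X = μX ∧ P.map Y = μY ∧ (1 - δ : ℝ) ≤ (P G).toReal ∧
        Real.exp (-ε) * ((P[|G]) (Y ⁻¹' A)).toReal ≤ ((P[|G]) (X ⁻¹' A)).toReal ∧
        ((P[|G]) (X ⁻¹' A)).toReal ≤ Real.exp ε * ((P[|G]) (Y ⁻¹' A)).toReal) :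
    ∀ A : Set α, MeasurableSet A →
      Real.exp (-ε) * ((μY A).toReal - δ) ≤ (μX A).toReal ∧
      (μX A).toReal ≤ Real.exp ε * (μY A).toReal + δ :=
  stmt3_general μX μY ε δ hcoup
end

section
/- Let P and Q be probability distributions such that there is an event B with Pr_P[B] ≤ δ and such that the conditional distributions P | Bᶜ and Q | Bᶜ satisfy e^{-ε} ≤ Pr_{P|Bᶜ}[S] / Pr_{Q|Bᶜ}[S] ≤ e^{ε} for all events S (i.e., they are (ε,0)-indistinguishable). Then for every event S, Pr_P[S] ≤ e^{ε}·Pr_Q[S] + δ. -/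
open MeasureTheory

namespace MeasureTheory

variable {α : Type*} [MeasurableSpace α]

theorem measureReal_le_measureReal_sdiff_add (μ : Measure α) [IsFiniteMeasure μ]
    (s t : Set α) : μ.real s ≤ μ.real (s \ t) + μ.real t :=
  calc μ.real s ≤ μ.real (s \ t ∪ t) := measureReal_mono (by simp)
    _ ≤ μ.real (s \ t) + μ.real t := measureReal_union_le _ _

theorem measureReal_le_mul_add_of_restrict_compl {μ ν : Measure α} [IsFiniteMeasure μ]
    [IsFiniteMeasure ν] {c : ℝ} (hc : 0 ≤ c) {s t : Set α} (hs : MeasurableSet s)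
    (h : (μ.restrict tᶜ).real s ≤ c * (ν.restrict tᶜ).real s) :
    μ.real s ≤ c * ν.real s + μ.real t := by
  rw [measureReal_restrict_apply hs, measureReal_restrict_apply hs, ← Set.sdiff_eq] at h
  have hν : ν.real (s \ t) ≤ ν.real s := measureReal_mono Set.sdiff_subset
  calc μ.real s ≤ μ.real (s \ t) + μ.real t := measureReal_le_measureReal_sdiff_add μ s t
    _ ≤ c * ν.real s + μ.real t := by gcongr; exact h.trans (mul_le_mul_of_nonneg_left hν hc)

end MeasureTheory

theorem stmt4_general {α : Type*} [MeasurableSpace α]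
    (P Q : Measure α) [IsProbabilityMeasure P] [IsProbabilityMeasure Q]
    (ε δ : ℝ) (B : Set α)
    (hPB : (P B).toReal ≤ δ)
    (hcond : ∀ S : Set α, MeasurableSet S →
      ((P.restrict Bᶜ) S).toReal ≤ Real.exp ε * ((Q.restrict Bᶜ) S).toReal ∧
      ((Q.restrict Bᶜ) S).toReal ≤ Real.exp ε * ((P.restrict Bᶜ) S).toReal) :
    ∀ S : Set α, MeasurableSet S → (P S).toReal ≤ Real.exp ε * (Q S).toReal + δ := by
  intro S hS
  have h := measureReal_le_mul_add_of_restrict_compl (Real.exp_pos ε).le hS (hcond S hS).1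
  exact h.trans (add_le_add_right hPB _)

/-- Suppose `P` and `Q` are probability measures, `B` is an event with `Pr_P[B] ≤ δ`,
and the restrictions of `P` and `Q` to `Bᶜ` are `(ε,0)`-indistinguishable, i.e.
`Pr_{P|Bᶜ}[S] ≤ e^ε Pr_{Q|Bᶜ}[S]` and `Pr_{Q|Bᶜ}[S] ≤ e^ε Pr_{P|Bᶜ}[S]` for all
measurable `S`.  Then for every measurable `S`, `Pr_P[S] ≤ e^ε·Pr_Q[S] + δ`. -/
theorem stmt4 {α : Type*} [MeasurableSpace α]
    (P Q : Measure α) [IsProbabilityMeasure P] [IsProbabilityMeasure Q]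
    (ε δ : ℝ) (B : Set α) (hB : MeasurableSet B)
    (hPB : (P B).toReal ≤ δ)
    (hcond : ∀ S : Set α, MeasurableSet S →
      ((P.restrict Bᶜ) S).toReal ≤ Real.exp ε * ((Q.restrict Bᶜ) S).toReal ∧
      ((Q.restrict Bᶜ) S).toReal ≤ Real.exp ε * ((P.restrict Bᶜ) S).toReal) :
    ∀ S : Set α, MeasurableSet S → (P S).toReal ≤ Real.exp ε * (Q S).toReal + δ :=
  stmt4_general P Q ε δ B hPB hcond
end

section
/- Let X be a sum of n independent {0,1}-valued random variables. Then for all ε ∈ (0,1) and δ ∈ (0,1), Pr[X ≥ e^{ε}·E[X] + ((e^{ε}+1)/ε)·ln(1/δ)] ≤ δ. -/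
open MeasureTheory ProbabilityTheory Real

/-! Exponential Markov inequality at `t = ε`. A `{0,1}`-valued variable with mean `p` has
`E[e^{εY}] = 1 + (e^ε - 1) p ≤ exp ((e^ε - 1) p)`, so by independence the tail of `X` at `a` is at
most `exp ((e^ε - 1) E[X] - ε a)`. Since `e^ε - 1 ≤ ε e^ε`, the terms in `E[X]` cancel at
`a = e^ε E[X] + ((e^ε + 1)/ε) ln(1/δ)`, leaving `exp (-(e^ε + 1) ln(1/δ)) ≤ δ`. -/

lemma exp_mul_eq_of_eq_zero_or_one {Ω : Type*} {Y : Ω → ℝ} (h01 : ∀ ω, Y ω = 0 ∨ Y ω = 1)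
    (t : ℝ) : (fun ω => exp (t * Y ω)) = fun ω => 1 + (exp t - 1) * Y ω :=
  funext fun ω => by rcases h01 ω with h | h <;> simp [h]

lemma Real.exp_sub_one_le_mul_exp (t : ℝ) : exp t - 1 ≤ t * exp t := by
  have h := one_sub_le_exp_neg t
  have hprod : exp (-t) * exp t = 1 := by rw [← exp_add, neg_add_cancel, exp_zero]
  nlinarith [exp_pos t]

lemma Real.chernoff_exponent_le_log {ε m δ : ℝ} (hε : 0 < ε) (hm : 0 ≤ m) (hδ₀ : 0 ≤ δ)
    (hδ₁ : δ ≤ 1) :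
    (exp ε - 1) * m - ε * (exp ε * m + ((exp ε + 1) / ε) * log (1 / δ)) ≤ log δ := by
  have hlog : log δ ≤ 0 := log_nonpos hδ₀ hδ₁
  have hcancel : ε * (((exp ε + 1) / ε) * log (1 / δ)) = -((exp ε + 1) * log δ) := by
    rw [one_div, log_inv]
    field_simp
  have hmean : (exp ε - 1) * m ≤ ε * exp ε * m :=
    mul_le_mul_of_nonneg_right (exp_sub_one_le_mul_exp ε) hm
  nlinarith [exp_pos ε]

namespace ProbabilityTheory

variable {Ω : Type*} [MeasurableSpace Ω] {μ : Measure Ω}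

section ZeroOne

variable {Y : Ω → ℝ}

lemma integrable_of_eq_zero_or_one [IsFiniteMeasure μ] (hY : AEMeasurable Y μ)
    (h01 : ∀ ω, Y ω = 0 ∨ Y ω = 1) : Integrable Y μ :=
  Integrable.of_mem_Icc 0 1 hY <| .of_forall fun ω => by
    rcases h01 ω with h | h <;> simp [h]

lemma integrable_exp_mul_of_eq_zero_or_one [IsFiniteMeasure μ] (hY : AEMeasurable Y μ)
    (h01 : ∀ ω, Y ω = 0 ∨ Y ω = 1) (t : ℝ) : Integrable (fun ω => exp (t * Y ω)) μ := by
  rw [exp_mul_eq_of_eq_zero_or_one h01]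
  exact (integrable_const 1).add ((integrable_of_eq_zero_or_one hY h01).const_mul _)

lemma mgf_eq_of_eq_zero_or_one [IsProbabilityMeasure μ] (hY : AEMeasurable Y μ)
    (h01 : ∀ ω, Y ω = 0 ∨ Y ω = 1) (t : ℝ) :
    mgf Y μ t = 1 + (exp t - 1) * μ[Y] := by
  rw [mgf, exp_mul_eq_of_eq_zero_or_one h01, integral_add (integrable_const 1)
    ((integrable_of_eq_zero_or_one hY h01).const_mul _), integral_const_mul]
  simp

lemma mgf_le_exp_of_eq_zero_or_one [IsProbabilityMeasure μ] (hY : AEMeasurable Y μ)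
    (h01 : ∀ ω, Y ω = 0 ∨ Y ω = 1) (t : ℝ) :
    mgf Y μ t ≤ exp ((exp t - 1) * μ[Y]) := by
  rw [mgf_eq_of_eq_zero_or_one hY h01, add_comm]
  exact add_one_le_exp _

end ZeroOne

variable {ι : Type*} [Fintype ι] {X : ι → Ω → ℝ}

lemma iIndepFun.mgf_sum_le_exp_of_eq_zero_or_one (hindep : iIndepFun X μ)
    (hmeas : ∀ i, Measurable (X i)) (h01 : ∀ i ω, X i ω = 0 ∨ X i ω = 1) (t : ℝ) :
    mgf (∑ i, X i) μ t ≤ exp ((exp t - 1) * ∫ ω, ∑ i, X i ω ∂μ) := by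
  have := hindep.isProbabilityMeasure
  rw [hindep.mgf_sum hmeas, integral_finsetSum _ fun i _ =>
    integrable_of_eq_zero_or_one (hmeas i).aemeasurable (h01 i), Finset.mul_sum, exp_sum]
  exact Finset.prod_le_prod (fun i _ => mgf_nonneg)
    fun i _ => mgf_le_exp_of_eq_zero_or_one (hmeas i).aemeasurable (h01 i) t

lemma iIndepFun.measure_sum_ge_le_exp_of_eq_zero_or_one (hindep : iIndepFun X μ)
    (hmeas : ∀ i, Measurable (X i)) (h01 : ∀ i ω, X i ω = 0 ∨ X i ω = 1)
    {t : ℝ} (ht : 0 ≤ t) (a : ℝ) :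
    μ.real {ω | a ≤ ∑ i, X i ω} ≤ exp ((exp t - 1) * (∫ ω, ∑ i, X i ω ∂μ) - t * a) := by
  have := hindep.isProbabilityMeasure
  have hint : Integrable (fun ω => exp (t * (∑ i, X i) ω)) μ :=
    hindep.integrable_exp_mul_sum hmeas fun i _ =>
      integrable_exp_mul_of_eq_zero_or_one (hmeas i).aemeasurable (h01 i) t
  have hmarkov := measure_ge_le_exp_mul_mgf a ht hint
  simp only [Finset.sum_apply] at hmarkov
  calc μ.real {ω | a ≤ ∑ i, X i ω}
      ≤ exp (-t * a) * exp ((exp t - 1) * ∫ ω, ∑ i, X i ω ∂μ) :=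
        hmarkov.trans (mul_le_mul_of_nonneg_left
          (hindep.mgf_sum_le_exp_of_eq_zero_or_one hmeas h01 t) (exp_pos _).le)
    _ = exp ((exp t - 1) * (∫ ω, ∑ i, X i ω ∂μ) - t * a) := by
        rw [← exp_add]; ring_nf

end ProbabilityTheory

theorem stmt6_general {Ω : Type*} [MeasurableSpace Ω] (μ : Measure Ω)
    (n : ℕ) (X : Fin n → Ω → ℝ)
    (hmeas : ∀ i, Measurable (X i))
    (hval : ∀ i ω, X i ω = 0 ∨ X i ω = 1)
    (hindep : iIndepFun X μ)
    (ε δ : ℝ) (hε : ε ∈ Set.Ioo (0 : ℝ) 1) (hδ : δ ∈ Set.Ioo (0 : ℝ) 1) :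
    (μ {ω | Real.exp ε * (∫ ω', (∑ i, X i ω') ∂μ) +
        ((Real.exp ε + 1) / ε) * Real.log (1 / δ) ≤ ∑ i, X i ω}).toReal ≤ δ := by
  have hmean : 0 ≤ ∫ ω, ∑ i, X i ω ∂μ := integral_nonneg fun ω =>
    Finset.sum_nonneg fun i _ => by rcases hval i ω with h | h <;> simp [h]
  calc _ ≤ exp ((exp ε - 1) * (∫ ω, ∑ i, X i ω ∂μ) - ε * (exp ε * (∫ ω, ∑ i, X i ω ∂μ) +
          ((exp ε + 1) / ε) * log (1 / δ))) :=
        hindep.measure_sum_ge_le_exp_of_eq_zero_or_one hmeas hval hε.1.le _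
    _ ≤ exp (log δ) := exp_le_exp.mpr (chernoff_exponent_le_log hε.1 hmean hδ.1.le hδ.2.le)
    _ = δ := exp_log hδ.1

/-- Let `X = ∑ᵢ Xᵢ` be a sum of `n` independent `{0,1}`-valued random variables.
Then for all `ε, δ ∈ (0,1)`,
`Pr[X ≥ e^ε·E[X] + ((e^ε + 1)/ε)·ln(1/δ)] ≤ δ`. -/
theorem stmt6 {Ω : Type*} [MeasurableSpace Ω] (μ : Measure Ω) [IsProbabilityMeasure μ]
    (n : ℕ) (X : Fin n → Ω → ℝ)
    (hmeas : ∀ i, Measurable (X i))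
    (hval : ∀ i ω, X i ω = 0 ∨ X i ω = 1)
    (hindep : iIndepFun X μ)
    (ε δ : ℝ) (hε : ε ∈ Set.Ioo (0 : ℝ) 1) (hδ : δ ∈ Set.Ioo (0 : ℝ) 1) :
    (μ {ω | Real.exp ε * (∫ ω', (∑ i, X i ω') ∂μ) +
        ((Real.exp ε + 1) / ε) * Real.log (1 / δ) ≤ ∑ i, X i ω}).toReal ≤ δ :=
  stmt6_general μ n X hmeas hval hindep ε δ hε hδ
end

section
/- Let Y be a sum of n independent {0,1}-valued random variables. Then for all ε ∈ (0,1) and δ ∈ (0,1), Pr[Y ≤ e^{-ε}·E[Y] - ln(1/δ)/ε] ≤ δ. -/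
open MeasureTheory ProbabilityTheory Real Set

/-! The Chernoff method with parameter `t = -ε`. A `[0,1]`-valued `X` lies below the chord of
`x ↦ exp (t x)` on `[0,1]`, so `mgf X t ≤ 1 + (eᵗ - 1) E[X] ≤ exp ((eᵗ - 1) E[X])`, and by
independence the same bound holds for the sum `S`. Markov's inequality for `exp (t S)` then gives
`Pr[S ≤ a] ≤ exp (ε a + (e^{-ε} - 1) E[S])`. For `a = e^{-ε} E[S] - L / ε` the exponent is
`((1 + ε) e^{-ε} - 1) E[S] - L ≤ -L`, since `1 + ε ≤ e^ε`. -/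

lemma Real.exp_mul_le_one_add_mul {x : ℝ} (hx : x ∈ Icc 0 1) (t : ℝ) :
    exp (t * x) ≤ 1 + (exp t - 1) * x :=
  calc exp (t * x) = exp ((1 - x) * 0 + x * t) := by ring_nf
    _ ≤ (1 - x) * exp 0 + x * exp t :=
      convexOn_exp.2 (mem_univ _) (mem_univ _) (by linarith [hx.2]) hx.1 (by ring)
    _ = 1 + (exp t - 1) * x := by rw [exp_zero]; ring

namespace ProbabilityTheory

variable {Ω ι : Type*} [MeasurableSpace Ω] {μ : Measure Ω} [IsProbabilityMeasure μ]

lemma mgf_le_exp_of_mem_Icc {X : Ω → ℝ} (hm : AEMeasurable X μ)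
    (hb : ∀ᵐ ω ∂μ, X ω ∈ Icc 0 1) (t : ℝ) :
    mgf X μ t ≤ exp ((exp t - 1) * μ[X]) := by
  have hX : Integrable X μ := .of_mem_Icc 0 1 hm hb
  calc mgf X μ t ≤ ∫ ω, 1 + (exp t - 1) * X ω ∂μ :=
        integral_mono_ae (integrable_exp_mul_of_mem_Icc hm hb)
          ((integrable_const 1).add (hX.const_mul _))
          (hb.mono fun ω hω => exp_mul_le_one_add_mul hω t)
    _ = 1 + (exp t - 1) * μ[X] := by
      rw [integral_add (integrable_const 1) (hX.const_mul _), integral_const_mul]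
      simp
    _ ≤ exp ((exp t - 1) * μ[X]) := by linarith [add_one_le_exp ((exp t - 1) * μ[X])]

variable {X : ι → Ω → ℝ} (hindep : iIndepFun X μ) (hm : ∀ i, AEMeasurable (X i) μ)
  (hb : ∀ i, ∀ᵐ ω ∂μ, X i ω ∈ Icc 0 1) (s : Finset ι)
include hindep hm hb

lemma iIndepFun.mgf_sum_le_exp_of_mem_Icc (t : ℝ) :
    mgf (fun ω => ∑ i ∈ s, X i ω) μ t ≤ exp ((exp t - 1) * ∫ ω, ∑ i ∈ s, X i ω ∂μ) := by
  have hmgf := hindep.mgf_sum₀ hm s (t := t)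
  rw [Finset.sum_fn] at hmgf
  rw [hmgf, integral_finsetSum s fun i _ => Integrable.of_mem_Icc 0 1 (hm i) (hb i),
    Finset.mul_sum, exp_sum]
  exact Finset.prod_le_prod (fun _ _ => mgf_nonneg) fun i _ => mgf_le_exp_of_mem_Icc (hm i) (hb i) t

lemma iIndepFun.measureReal_sum_le_le_exp_of_mem_Icc {t : ℝ} (ht : t ≤ 0) (a : ℝ) :
    μ.real {ω | ∑ i ∈ s, X i ω ≤ a} ≤
      exp (-t * a + (exp t - 1) * ∫ ω, ∑ i ∈ s, X i ω ∂μ) := by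
  have hsum : ∀ᵐ ω ∂μ, ∑ i ∈ s, X i ω ∈ Icc 0 (s.card : ℝ) := by
    filter_upwards [(Filter.eventually_all_finset s).2 fun i _ => hb i] with ω hω
    exact ⟨Finset.sum_nonneg fun i hi => (hω i hi).1,
      by simpa using Finset.sum_le_card_nsmul s _ 1 fun i hi => (hω i hi).2⟩
  have hsum_m : AEMeasurable (fun ω => ∑ i ∈ s, X i ω) μ := by fun_prop
  calc μ.real {ω | ∑ i ∈ s, X i ω ≤ a}
      ≤ exp (-t * a) * mgf (fun ω => ∑ i ∈ s, X i ω) μ t :=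
        measure_le_le_exp_mul_mgf a ht (integrable_exp_mul_of_mem_Icc hsum_m hsum)
    _ ≤ exp (-t * a) * exp ((exp t - 1) * ∫ ω, ∑ i ∈ s, X i ω ∂μ) :=
        mul_le_mul_of_nonneg_left (hindep.mgf_sum_le_exp_of_mem_Icc hm hb s t) (exp_nonneg _)
    _ = _ := (exp_add _ _).symm

lemma iIndepFun.measureReal_sum_le_exp_neg_mul_integral_sub_le {ε : ℝ} (hε : 0 < ε) (L : ℝ) :
    μ.real {ω | ∑ i ∈ s, X i ω ≤ exp (-ε) * (∫ ω, ∑ i ∈ s, X i ω ∂μ) - L / ε} ≤ exp (-L) := by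
  refine (hindep.measureReal_sum_le_le_exp_of_mem_Icc hm hb s (neg_nonpos.2 hε.le) _).trans
    (exp_le_exp.2 ?_)
  set E := ∫ ω, ∑ i ∈ s, X i ω ∂μ
  have hE : 0 ≤ E := integral_nonneg_of_ae <| by
    filter_upwards [(Filter.eventually_all_finset s).2 fun i _ => hb i] with ω hω
    exact Finset.sum_nonneg fun i hi => (hω i hi).1
  have hexp : (1 + ε) * exp (-ε) ≤ 1 := by
    rw [exp_neg, ← div_eq_mul_inv, div_le_one (exp_pos ε)]
    linarith [add_one_le_exp ε]
  have hexponent : -(-ε) * (exp (-ε) * E - L / ε) + (exp (-ε) - 1) * E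
      = ((1 + ε) * exp (-ε) - 1) * E - L := by
    field_simp
    ring
  rw [hexponent]
  linarith [mul_nonpos_of_nonpos_of_nonneg (sub_nonpos.2 hexp) hE]

end ProbabilityTheory

/-- Let `Y = ∑ᵢ Yᵢ` be a sum of `n` independent `{0,1}`-valued random variables.
Then for all `ε, δ ∈ (0,1)`,
`Pr[Y ≤ e^{-ε}·E[Y] - ln(1/δ)/ε] ≤ δ`. -/
theorem stmt7 {Ω : Type*} [MeasurableSpace Ω] (μ : Measure Ω) [IsProbabilityMeasure μ]
    (n : ℕ) (Y : Fin n → Ω → ℝ)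
    (hmeas : ∀ i, Measurable (Y i))
    (hval : ∀ i ω, Y i ω = 0 ∨ Y i ω = 1)
    (hindep : iIndepFun Y μ)
    (ε δ : ℝ) (hε : ε ∈ Set.Ioo (0 : ℝ) 1) (hδ : δ ∈ Set.Ioo (0 : ℝ) 1) :
    (μ {ω | (∑ i, Y i ω) ≤ Real.exp (-ε) * (∫ ω', (∑ i, Y i ω') ∂μ) -
        Real.log (1 / δ) / ε}).toReal ≤ δ := by
  have hb : ∀ i, ∀ᵐ ω ∂μ, Y i ω ∈ Icc 0 1 := fun i => .of_forall fun ω => by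
    rcases hval i ω with h | h <;> simp [h]
  have hδ_eq : exp (-log (1 / δ)) = δ := by
    rw [one_div, log_inv, neg_neg, exp_log hδ.1]
  exact (hindep.measureReal_sum_le_exp_neg_mul_integral_sub_le
    (fun i => (hmeas i).aemeasurable) hb Finset.univ hε.1 _).trans_eq hδ_eq
end

section
/- Let X = ∑ᵢ₌₁ⁿ Xᵢ and Y = ∑ᵢ₌₁ⁿ Yᵢ be sums of independent {0,1}-valued random variables (X and Y independent of each other), and fix ε₁, ε₀, δ₀ ∈ (0,1). Let C = 2(e^{ε₀+ε₁} + 1 + e^{ε₀/2}). If E[X] ≤ e^{ε₁}·E[Y], then Pr[X ≥ e^{ε₁+ε₀}·Y + (C/ε₀)·ln(2/δ₀)] ≤ δ₀. -/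
/-!
Apply the multiplicative Chernoff bounds for sums of independent Bernoulli variables with
`ε = ε₀ / 2` and failure probability `δ₀ / 2` each: with `M = ln (2 / δ₀) / ε`, outside an event
of probability at most `δ₀` we have `X < e^ε E[X] + (e^ε + 1) M` and `E[Y] < e^ε (Y + M)`.
Chaining these through `E[X] ≤ e^{ε₁} E[Y]` gives
`X < e^{ε₁ + ε₀} Y + (e^{ε₁ + ε₀} + e^ε + 1) M`, and the right-hand side is exactly the threshold
`e^{ε₁ + ε₀} Y + (C / ε₀) ln (2 / δ₀)`.
-/

open MeasureTheory ProbabilityTheory Real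

section Bernoulli

variable {Ω ι : Type*} [MeasurableSpace Ω] {μ : Measure Ω}

lemma mem_Icc_of_eq_zero_or_eq_one {x : ℝ} (h : x = 0 ∨ x = 1) : x ∈ Set.Icc (0 : ℝ) 1 := by
  rcases h with rfl | rfl <;> simp

lemma integral_sum_nonneg_of_eq_zero_or_eq_one {Z : ι → Ω → ℝ}
    (hZ : ∀ i ω, Z i ω = 0 ∨ Z i ω = 1) (s : Finset ι) : 0 ≤ ∫ ω, ∑ i ∈ s, Z i ω ∂μ :=
  integral_nonneg fun ω => Finset.sum_nonneg fun i _ => (mem_Icc_of_eq_zero_or_eq_one (hZ i ω)).1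

variable [IsProbabilityMeasure μ]

lemma mgf_eq_of_eq_zero_or_eq_one {W : Ω → ℝ} (hm : Measurable W) (hW : ∀ ω, W ω = 0 ∨ W ω = 1)
    (t : ℝ) : mgf W μ t = 1 + (exp t - 1) * ∫ ω, W ω ∂μ := by
  have hint : Integrable W μ := .of_mem_Icc 0 1 hm.aemeasurable
    (ae_of_all _ fun ω => mem_Icc_of_eq_zero_or_eq_one (hW ω))
  have hlin : ∀ ω, exp (t * W ω) = 1 + (exp t - 1) * W ω := fun ω => by
    rcases hW ω with h | h <;> simp [h]
  simp_rw [mgf, hlin]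
  rw [integral_add (integrable_const 1) (hint.const_mul _), integral_const_mul]
  simp

lemma mgf_le_exp_of_eq_zero_or_eq_one {W : Ω → ℝ} (hm : Measurable W)
    (hW : ∀ ω, W ω = 0 ∨ W ω = 1) (t : ℝ) :
    mgf W μ t ≤ exp ((exp t - 1) * ∫ ω, W ω ∂μ) := by
  rw [mgf_eq_of_eq_zero_or_eq_one hm hW, add_comm]
  exact add_one_le_exp _

lemma mgf_sum_le_exp_of_eq_zero_or_eq_one {Z : ι → Ω → ℝ} (hm : ∀ i, Measurable (Z i))
    (hZ : ∀ i ω, Z i ω = 0 ∨ Z i ω = 1) (hindep : iIndepFun Z μ) (s : Finset ι) (t : ℝ) :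
    mgf (∑ i ∈ s, Z i) μ t ≤ exp ((exp t - 1) * ∫ ω, ∑ i ∈ s, Z i ω ∂μ) := by
  have hint : ∀ i ∈ s, Integrable (Z i) μ := fun i _ => .of_mem_Icc 0 1 (hm i).aemeasurable
    (ae_of_all _ fun ω => mem_Icc_of_eq_zero_or_eq_one (hZ i ω))
  rw [hindep.mgf_sum hm, integral_finsetSum s hint, Finset.mul_sum, exp_sum]
  exact Finset.prod_le_prod (fun i _ => mgf_nonneg)
    fun i _ => mgf_le_exp_of_eq_zero_or_eq_one (hm i) (hZ i) t

lemma integrable_exp_mul_sum_of_eq_zero_or_eq_one {Z : ι → Ω → ℝ} (hm : ∀ i, Measurable (Z i))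
    (hZ : ∀ i ω, Z i ω = 0 ∨ Z i ω = 1) (hindep : iIndepFun Z μ) (s : Finset ι) (t : ℝ) :
    Integrable (fun ω => exp (t * (∑ i ∈ s, Z i) ω)) μ :=
  hindep.integrable_exp_mul_sum hm fun i _ => integrable_exp_mul_of_mem_Icc
    (hm i).aemeasurable (ae_of_all _ fun ω => mem_Icc_of_eq_zero_or_eq_one (hZ i ω))

lemma measureReal_sum_ge_le_exp {Z : ι → Ω → ℝ} (hm : ∀ i, Measurable (Z i))
    (hZ : ∀ i ω, Z i ω = 0 ∨ Z i ω = 1) (hindep : iIndepFun Z μ) (s : Finset ι)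
    {t : ℝ} (ht : 0 ≤ t) (a : ℝ) :
    μ.real {ω | a ≤ ∑ i ∈ s, Z i ω} ≤
      exp (-t * a + (exp t - 1) * ∫ ω, ∑ i ∈ s, Z i ω ∂μ) := by
  have h := measure_ge_le_exp_mul_mgf a ht
    (integrable_exp_mul_sum_of_eq_zero_or_eq_one hm hZ hindep s t)
  simp only [Finset.sum_apply] at h
  rw [exp_add]
  exact h.trans (by gcongr; simpa using mgf_sum_le_exp_of_eq_zero_or_eq_one hm hZ hindep s t)

lemma measureReal_sum_le_le_exp {Z : ι → Ω → ℝ} (hm : ∀ i, Measurable (Z i))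
    (hZ : ∀ i ω, Z i ω = 0 ∨ Z i ω = 1) (hindep : iIndepFun Z μ) (s : Finset ι)
    {t : ℝ} (ht : t ≤ 0) (a : ℝ) :
    μ.real {ω | ∑ i ∈ s, Z i ω ≤ a} ≤
      exp (-t * a + (exp t - 1) * ∫ ω, ∑ i ∈ s, Z i ω ∂μ) := by
  have h := measure_le_le_exp_mul_mgf a ht
    (integrable_exp_mul_sum_of_eq_zero_or_eq_one hm hZ hindep s t)
  simp only [Finset.sum_apply] at h
  rw [exp_add]
  exact h.trans (by gcongr; simpa using mgf_sum_le_exp_of_eq_zero_or_eq_one hm hZ hindep s t)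

lemma measureReal_sum_ge_exp_mul_integral_add_le {Z : ι → Ω → ℝ} (hm : ∀ i, Measurable (Z i))
    (hZ : ∀ i ω, Z i ω = 0 ∨ Z i ω = 1) (hindep : iIndepFun Z μ) (s : Finset ι)
    {ε L : ℝ} (hε : 0 < ε) (hL : 0 ≤ L) :
    μ.real {ω | exp ε * (∫ ω, ∑ i ∈ s, Z i ω ∂μ) + (exp ε + 1) * (L / ε) ≤ ∑ i ∈ s, Z i ω} ≤
      exp (-L) := by
  refine (measureReal_sum_ge_le_exp hm hZ hindep s hε.le _).trans (exp_le_exp.2 ?_)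
  have hm0 := integral_sum_nonneg_of_eq_zero_or_eq_one (μ := μ) hZ s
  have hcoef : exp ε - 1 - ε * exp ε ≤ 0 := by
    have := add_one_le_exp (-ε)
    rw [exp_neg] at this
    nlinarith [mul_inv_cancel₀ (exp_pos ε).ne', exp_pos ε]
  have : ε * (L / ε) = L := by field_simp
  nlinarith [exp_pos ε]

lemma measureReal_sum_le_exp_neg_mul_integral_sub_le {Z : ι → Ω → ℝ}
    (hm : ∀ i, Measurable (Z i)) (hZ : ∀ i ω, Z i ω = 0 ∨ Z i ω = 1) (hindep : iIndepFun Z μ)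
    (s : Finset ι) {ε : ℝ} (hε : 0 < ε) (L : ℝ) :
    μ.real {ω | ∑ i ∈ s, Z i ω ≤ exp (-ε) * (∫ ω, ∑ i ∈ s, Z i ω ∂μ) - L / ε} ≤ exp (-L) := by
  refine (measureReal_sum_le_le_exp hm hZ hindep s (neg_nonpos.2 hε.le) _).trans
    (exp_le_exp.2 ?_)
  have hm0 := integral_sum_nonneg_of_eq_zero_or_eq_one (μ := μ) hZ s
  have hcoef : (ε + 1) * exp (-ε) ≤ 1 := by
    have := add_one_le_exp ε
    rw [exp_neg]
    nlinarith [mul_inv_cancel₀ (exp_pos ε).ne', inv_pos.2 (exp_pos ε)]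
  have : ε * (L / ε) = L := by field_simp
  nlinarith

end Bernoulli

lemma le_or_le_of_mul_add_le {a c p q x y M : ℝ} (ha : 0 < a) (hc : 0 ≤ c) (hpq : p ≤ c * q)
    (h : a * a * c * y + (a * a * c + a + 1) * M ≤ x) :
    a * p + (a + 1) * M ≤ x ∨ y ≤ a⁻¹ * q - M := by
  by_contra! ⟨hx, hy⟩
  have hq : q < a * (y + M) := by
    have := mul_lt_mul_of_pos_left hy ha
    rw [mul_sub, ← mul_assoc, mul_inv_cancel₀ ha.ne', one_mul] at this
    linarith
  nlinarith [mul_le_mul_of_nonneg_left hpq ha.le,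
    mul_le_mul_of_nonneg_left hq.le (mul_nonneg ha.le hc)]

theorem stmt8_general {Ω : Type*} [MeasurableSpace Ω] (μ : Measure Ω) [IsProbabilityMeasure μ]
    (n : ℕ) (Z : (Fin n ⊕ Fin n) → Ω → ℝ)
    (hmeas : ∀ i, Measurable (Z i))
    (hval : ∀ i ω, Z i ω = 0 ∨ Z i ω = 1)
    (hindep : iIndepFun Z μ)
    (X Y : Ω → ℝ)
    (hX : ∀ ω, X ω = ∑ i, Z (Sum.inl i) ω)
    (hY : ∀ ω, Y ω = ∑ i, Z (Sum.inr i) ω)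
    (ε₁ ε₀ δ₀ : ℝ) (hε₀ : ε₀ ∈ Set.Ioo (0 : ℝ) 1)
    (hδ₀ : δ₀ ∈ Set.Ioo (0 : ℝ) 1)
    (C : ℝ) (hC : C = 2 * (Real.exp (ε₀ + ε₁) + 1 + Real.exp (ε₀ / 2)))
    (hEXY : (∫ ω, X ω ∂μ) ≤ Real.exp ε₁ * ∫ ω, Y ω ∂μ) :
    (μ {ω | Real.exp (ε₁ + ε₀) * Y ω + (C / ε₀) * Real.log (2 / δ₀) ≤ X ω}).toReal ≤
      δ₀ := by
  obtain rfl : X = fun ω => ∑ i, Z (Sum.inl i) ω := funext hX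
  obtain rfl : Y = fun ω => ∑ i, Z (Sum.inr i) ω := funext hY
  beta_reduce at hEXY
  obtain ⟨hε₀, -⟩ := hε₀
  obtain ⟨hδ₀, hδ₀1⟩ := hδ₀
  set L := log (2 / δ₀)
  have hL : 0 ≤ L := log_nonneg (by rw [le_div_iff₀ hδ₀]; linarith)
  have hexpL : exp (-L) = δ₀ / 2 := by rw [exp_neg, exp_log (by positivity), inv_div]
  have hε : 0 < ε₀ / 2 := by positivity
  have hA := measureReal_sum_ge_exp_mul_integral_add_le (fun _ => hmeas _) (fun _ => hval _)
    (hindep.precomp Sum.inl_injective) Finset.univ hε hL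
  have hB := measureReal_sum_le_exp_neg_mul_integral_sub_le (fun _ => hmeas _) (fun _ => hval _)
    (hindep.precomp Sum.inr_injective) Finset.univ hε L
  rw [exp_neg] at hB
  have hexp : exp (ε₁ + ε₀) = exp (ε₀ / 2) * exp (ε₀ / 2) * exp ε₁ := by
    rw [← exp_add, ← exp_add]; ring_nf
  have hCL : C / ε₀ * L = (exp (ε₁ + ε₀) + exp (ε₀ / 2) + 1) * (L / (ε₀ / 2)) := by
    rw [hC, add_comm ε₀]; field_simp; ring
  rw [← measureReal_def]
  refine (measureReal_mono fun ω hω => ?_).trans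
    ((measureReal_union_le _ _).trans ((add_le_add hA hB).trans_eq (by rw [hexpL]; ring)))
  exact le_or_le_of_mul_add_le (exp_pos _) (exp_pos ε₁).le hEXY (by rwa [← hexp, ← hCL])

/-- Let `X = ∑ᵢ Xᵢ` and `Y = ∑ᵢ Yᵢ` be sums of `{0,1}`-valued random variables,
where the whole family `X₁,…,Xₙ,Y₁,…,Yₙ` is independent (in particular `X` and `Y`
are independently coupled).  Fix `ε₁, ε₀, δ₀ ∈ (0,1)` and let
`C = 2(e^{ε₀+ε₁} + 1 + e^{ε₀/2})`.  If `E[X] ≤ e^{ε₁}·E[Y]`, then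
`Pr[X ≥ e^{ε₁+ε₀}·Y + (C/ε₀)·ln(2/δ₀)] ≤ δ₀`. -/
theorem stmt8 {Ω : Type*} [MeasurableSpace Ω] (μ : Measure Ω) [IsProbabilityMeasure μ]
    (n : ℕ) (Z : (Fin n ⊕ Fin n) → Ω → ℝ)
    (hmeas : ∀ i, Measurable (Z i))
    (hval : ∀ i ω, Z i ω = 0 ∨ Z i ω = 1)
    (hindep : iIndepFun Z μ)
    (X Y : Ω → ℝ)
    (hX : ∀ ω, X ω = ∑ i, Z (Sum.inl i) ω)
    (hY : ∀ ω, Y ω = ∑ i, Z (Sum.inr i) ω)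
    (ε₁ ε₀ δ₀ : ℝ) (hε₁ : ε₁ ∈ Set.Ioo (0 : ℝ) 1) (hε₀ : ε₀ ∈ Set.Ioo (0 : ℝ) 1)
    (hδ₀ : δ₀ ∈ Set.Ioo (0 : ℝ) 1)
    (C : ℝ) (hC : C = 2 * (Real.exp (ε₀ + ε₁) + 1 + Real.exp (ε₀ / 2)))
    (hEXY : (∫ ω, X ω ∂μ) ≤ Real.exp ε₁ * ∫ ω, Y ω ∂μ) :
    (μ {ω | Real.exp (ε₁ + ε₀) * Y ω + (C / ε₀) * Real.log (2 / δ₀) ≤ X ω}).toReal ≤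
      δ₀ :=
  stmt8_general μ n Z hmeas hval hindep X Y hX hY ε₁ ε₀ δ₀ hε₀ hδ₀ C hC hEXY
end

section
/- Consider a process with parameters p₁ ∈ (0,1], γ ∈ (0,1]: at each step, independently succeed with probability p₁ (halt), else halt with probability γ (outputting ⊥), else continue; run for at most T ≥ (1/γ)ln(2/ε₀) steps with ε₀ ≤ 1. Then Pr[output ⊥] ≤ ((1-p₁)(1+ε₀/2)/p₁)·γ. -/
/-!
With `a = (1-p)(1-γ)`, summing the geometric series gives `(1-a)·Pr[⊥] = (1-p)γ + p·aᵀ`, and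
`1 - a ≥ p`, so it suffices that `p(1-p)^(T-1)(1-γ)^T ≤ γ·ε₀/2`. Here `(1-γ)^T ≤ e^(-γT) ≤ ε₀/2`,
while `γT ≥ log 2` forces `p(1-p)^(T-1) ≤ γ` as soon as `T ≥ 2`, through
`(T-1)p(1-p)^(T-1) ≤ 1/e` (or `p(1-p) ≤ 1/4` when `T = 2`). For `T = 1` the factor `(1-γ)` is
handled directly: `1 - γ ≤ γe^(-γ)` on `[log 2, 1]`.
-/

open Real Finset

lemma one_sub_pow_le_exp_neg_mul {x : ℝ} (hx : x ≤ 1) (n : ℕ) :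
    (1 - x) ^ n ≤ exp (-(n * x)) :=
  calc (1 - x) ^ n ≤ exp (-x) ^ n :=
        pow_le_pow_left₀ (by linarith) (by linarith [add_one_le_exp (-x)]) n
    _ = exp (-(n * x)) := by rw [← exp_nat_mul, mul_neg]

lemma nat_mul_mul_one_sub_pow_le_exp_neg_one {p : ℝ} (hp₀ : 0 ≤ p) (hp₁ : p ≤ 1) (n : ℕ) :
    n * (p * (1 - p) ^ n) ≤ exp (-1) :=
  calc n * (p * (1 - p) ^ n) ≤ n * p * exp (-(n * p)) := by
        rw [← mul_assoc]
        exact mul_le_mul_of_nonneg_left (one_sub_pow_le_exp_neg_mul hp₁ n) (by positivity)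
    _ ≤ exp (-1) := mul_exp_neg_le_exp_neg_one _

lemma mul_one_sub_pow_le_of_log_two_le {p γ : ℝ} {n : ℕ} (hp₀ : 0 ≤ p) (hp₁ : p ≤ 1)
    (hn : 1 ≤ n) (hγ : log 2 ≤ γ * (n + 1)) : p * (1 - p) ^ n ≤ γ := by
  have hlog2 := log_two_gt_d9
  obtain rfl | hn2 : n = 1 ∨ 2 ≤ n := by omega
  · norm_num at hγ ⊢
    nlinarith [sq_nonneg (p - 1 / 2)]
  · have hn2' : (2 : ℝ) ≤ n := by exact_mod_cast hn2
    have hγn : exp (-1) ≤ γ * n := by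
      have := exp_neg_one_lt_d9
      have hγ0 : 0 ≤ γ := by nlinarith
      nlinarith
    have := nat_mul_mul_one_sub_pow_le_exp_neg_one hp₀ hp₁ n
    have hn0 : (0 : ℝ) < n := by linarith
    nlinarith

lemma one_sub_le_mul_exp_neg {γ : ℝ} (hγ₀ : log 2 ≤ γ) (hγ₁ : γ ≤ 1) :
    1 - γ ≤ γ * exp (-γ) := by
  have hlog2 := log_two_gt_d9
  have he := exp_one_lt_d9
  have he0 := exp_pos 1
  -- `e^{-γ} = e^{1-γ}/e ≥ (2-γ)/e`, and `e(1-γ) ≤ γ(2-γ)` on `[log 2, 1]` by convexity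
  have hexp : 2 - γ ≤ exp (-γ) * exp 1 := by
    rw [← exp_add]; linarith [add_one_le_exp (-γ + 1)]
  nlinarith [mul_nonneg (by linarith : (0:ℝ) ≤ γ - 0.6931471803) (by linarith : (0:ℝ) ≤ 1 - γ)]

lemma mul_one_sub_pow_mul_one_sub_pow_succ_le {p γ : ℝ} {n : ℕ} (hp₀ : 0 ≤ p) (hp₁ : p ≤ 1)
    (hγ₁ : γ ≤ 1) (hγ : log 2 ≤ γ * (n + 1)) :
    p * (1 - p) ^ n * (1 - γ) ^ (n + 1) ≤ γ * exp (-(γ * (n + 1))) := by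
  have hγ₀ : 0 ≤ γ := by nlinarith [log_two_gt_d9]
  rcases Nat.eq_zero_or_pos n with rfl | hn
  · norm_num at hγ ⊢
    nlinarith [one_sub_le_mul_exp_neg hγ hγ₁]
  · have hexp : (1 - γ) ^ (n + 1) ≤ exp (-(γ * (n + 1))) := by
      simpa [mul_comm] using one_sub_pow_le_exp_neg_mul hγ₁ (n + 1)
    exact mul_le_mul (mul_one_sub_pow_le_of_log_two_le hp₀ hp₁ hn hγ) hexp
      (pow_nonneg (by linarith) _) hγ₀

/-- The process outputs `⊥` at step `j + 1` after `j` steps that neither succeed nor halt, or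
when it runs out of steps. -/
def botProb (p γ : ℝ) (T : ℕ) : ℝ :=
  (∑ j ∈ range T, ((1 - p) * (1 - γ)) ^ j * ((1 - p) * γ)) + ((1 - p) * (1 - γ)) ^ T

lemma one_sub_mul_botProb (p γ : ℝ) (T : ℕ) :
    (1 - (1 - p) * (1 - γ)) * botProb p γ T = (1 - p) * γ + p * ((1 - p) * (1 - γ)) ^ T := by
  have := geom_sum_mul ((1 - p) * (1 - γ)) T
  rw [botProb, ← sum_mul]
  linear_combination (-((1 - p) * γ)) * this

lemma botProb_succ_le {p γ δ : ℝ} {n : ℕ} (hp₀ : 0 < p) (hp₁ : p ≤ 1) (hγ₀ : 0 ≤ γ)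
    (hγ₁ : γ ≤ 1) (h : p * (1 - p) ^ n * (1 - γ) ^ (n + 1) ≤ γ * δ) :
    botProb p γ (n + 1) ≤ (1 - p) * (1 + δ) / p * γ := by
  have hq : 0 ≤ 1 - p := by linarith
  have hnum : (1 - (1 - p) * (1 - γ)) * botProb p γ (n + 1) ≤ (1 - p) * (1 + δ) * γ := by
    rw [one_sub_mul_botProb]
    have : p * ((1 - p) * (1 - γ)) ^ (n + 1) =
        (1 - p) * (p * (1 - p) ^ n * (1 - γ) ^ (n + 1)) := by
      rw [mul_pow, pow_succ]; ring
    nlinarith [mul_le_mul_of_nonneg_left h hq]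
  have hden : p ≤ 1 - (1 - p) * (1 - γ) := by nlinarith
  have hbot : 0 ≤ botProb p γ (n + 1) := by
    have : 0 ≤ 1 - γ := by linarith
    unfold botProb; positivity
  rw [div_mul_eq_mul_div, le_div_iff₀ hp₀]
  nlinarith

/-- Consider the process with parameters `p₁ ∈ (0,1]`, `γ ∈ (0,1]`: at each step,
independently succeed with probability `p₁` (halt), else halt with probability `γ`
(outputting `⊥`), else continue; run for at most `T ≥ (1/γ)·ln(2/ε₀)` steps, where
`0 < ε₀ ≤ 1`.  Then the probability of outputting `⊥`, namely
`∑_{j=1}^{T} ((1-p₁)(1-γ))^{j-1}(1-p₁)γ + ((1-p₁)(1-γ))^T`, is at most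
`((1-p₁)(1+ε₀/2)/p₁)·γ`. -/
theorem stmt10 (p₁ γ ε₀ : ℝ) (T : ℕ)
    (hp : p₁ ∈ Set.Ioc (0 : ℝ) 1) (hγ : γ ∈ Set.Ioc (0 : ℝ) 1)
    (hε₀ : 0 < ε₀) (hε₀' : ε₀ ≤ 1)
    (hT : (1 / γ) * Real.log (2 / ε₀) ≤ (T : ℝ)) :
    (∑ j ∈ Finset.range T, ((1 - p₁) * (1 - γ)) ^ j * ((1 - p₁) * γ)) +
        ((1 - p₁) * (1 - γ)) ^ T ≤
      ((1 - p₁) * (1 + ε₀ / 2) / p₁) * γ := by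
  obtain ⟨hp₀, hp₁⟩ := hp
  obtain ⟨hγ₀, hγ₁⟩ := hγ
  have hlogT : log (2 / ε₀) ≤ γ * T := by
    rwa [one_div_mul_eq_div, div_le_iff₀' hγ₀] at hT
  have hlog2 : log 2 ≤ γ * T :=
    (log_le_log two_pos (by rw [le_div_iff₀ hε₀]; linarith)).trans hlogT
  have hexp : exp (-(γ * T)) ≤ ε₀ / 2 := by
    rw [exp_neg, inv_le_comm₀ (exp_pos _) (by positivity), inv_div]
    exact (log_le_iff_le_exp (by positivity)).mp hlogT
  obtain ⟨n, rfl⟩ : ∃ n, T = n + 1 :=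
    Nat.exists_eq_succ_of_ne_zero (by rintro rfl; norm_num at hlog2; linarith [log_two_gt_d9])
  push_cast at hlog2 hexp
  exact botProb_succ_le hp₀ hp₁ hγ₀.le hγ₁ <|
    (mul_one_sub_pow_mul_one_sub_pow_succ_le hp₀.le hp₁ hγ₁ hlog2).trans
      (mul_le_mul_of_nonneg_left hexp hγ₀.le)
end

section
/- Fix γ ∈ (0,1), ε₁ > 0, and let p, p₀, p₁, p', p₀', p₁' ∈ [0,1] with p₁ = p₀ + p, p₁' = p₀' + p', p ≤ e^{ε₁}p', p₀' ≤ e^{ε₁}p₀, and p₁' ≤ e^{ε₁}p₁. Then γp/((p₀(1-γ)+γ)(p₁(1-γ)+γ)) ≤ e^{3ε₁}·γp'/((p₀'(1-γ)+γ)(p₁'(1-γ)+γ)). -/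
/-- Fix `γ ∈ (0,1)`, `ε₁ > 0`, and let `p, p₀, p₁, p', p₀', p₁' ∈ [0,1]` with
`p₁ = p₀ + p`, `p₁' = p₀' + p'`, `p ≤ e^{ε₁}p'`, `p₀' ≤ e^{ε₁}p₀`, `p₁' ≤ e^{ε₁}p₁`.
Then `γp/((p₀(1-γ)+γ)(p₁(1-γ)+γ)) ≤ e^{3ε₁}·γp'/((p₀'(1-γ)+γ)(p₁'(1-γ)+γ))`. -/
theorem stmt13 (γ ε₁ p p₀ p₁ p' p₀' p₁' : ℝ)
    (hγ : γ ∈ Set.Ioo (0 : ℝ) 1) (hε₁ : 0 < ε₁)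
    (hp : p ∈ Set.Icc (0 : ℝ) 1) (hp₀ : p₀ ∈ Set.Icc (0 : ℝ) 1)
    (hp₁ : p₁ ∈ Set.Icc (0 : ℝ) 1)
    (hp' : p' ∈ Set.Icc (0 : ℝ) 1) (hp₀' : p₀' ∈ Set.Icc (0 : ℝ) 1)
    (hp₁' : p₁' ∈ Set.Icc (0 : ℝ) 1)
    (hsum : p₁ = p₀ + p) (hsum' : p₁' = p₀' + p')
    (h1 : p ≤ Real.exp ε₁ * p') (h2 : p₀' ≤ Real.exp ε₁ * p₀)
    (h3 : p₁' ≤ Real.exp ε₁ * p₁) :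
    γ * p / ((p₀ * (1 - γ) + γ) * (p₁ * (1 - γ) + γ)) ≤
      Real.exp (3 * ε₁) *
        (γ * p' / ((p₀' * (1 - γ) + γ) * (p₁' * (1 - γ) + γ))) := by
  obtain ⟨hγ0, hγ1⟩ := hγ
  have hE : (1:ℝ) ≤ Real.exp ε₁ := Real.one_le_exp hε₁.le
  have hE0 : (0:ℝ) < Real.exp ε₁ := Real.exp_pos _
  have h1γ : 0 < 1 - γ := by linarith
  have hA : 0 < p₀ * (1 - γ) + γ := by nlinarith [hp₀.1]
  have hB : 0 < p₁ * (1 - γ) + γ := by nlinarith [hp₁.1]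
  have hA' : 0 < p₀' * (1 - γ) + γ := by nlinarith [hp₀'.1]
  have hB' : 0 < p₁' * (1 - γ) + γ := by nlinarith [hp₁'.1]
  have hAle : p₀' * (1 - γ) + γ ≤ Real.exp ε₁ * (p₀ * (1 - γ) + γ) := by
    nlinarith [hp₀.1]
  have hBle : p₁' * (1 - γ) + γ ≤ Real.exp ε₁ * (p₁ * (1 - γ) + γ) := by
    nlinarith [hp₁.1]
  rw [div_le_iff₀ (by positivity)]
  have h3e : Real.exp (3 * ε₁) = Real.exp ε₁ * Real.exp ε₁ * Real.exp ε₁ := by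
    rw [← Real.exp_add, ← Real.exp_add]; ring_nf
  have key : γ * p * ((p₀' * (1 - γ) + γ) * (p₁' * (1 - γ) + γ)) ≤
      Real.exp (3 * ε₁) * (γ * p') * ((p₀ * (1 - γ) + γ) * (p₁ * (1 - γ) + γ)) := by
    have step1 : γ * p * ((p₀' * (1 - γ) + γ) * (p₁' * (1 - γ) + γ)) ≤
        γ * (Real.exp ε₁ * p') * ((Real.exp ε₁ * (p₀ * (1 - γ) + γ)) * (Real.exp ε₁ * (p₁ * (1 - γ) + γ))) := by
      have hp0 := hp.1
      have := mul_le_mul hAle hBle hB'.le (by positivity)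
      have hpp : γ * p ≤ γ * (Real.exp ε₁ * p') := by nlinarith
      exact mul_le_mul hpp this (by positivity) (mul_nonneg hγ0.le (by nlinarith [hp.1]))
    calc γ * p * ((p₀' * (1 - γ) + γ) * (p₁' * (1 - γ) + γ)) ≤ _ := step1
      _ = Real.exp (3 * ε₁) * (γ * p') * ((p₀ * (1 - γ) + γ) * (p₁ * (1 - γ) + γ)) := by
          rw [h3e]; ring
  calc γ * p ≤ Real.exp (3 * ε₁) * (γ * p') * ((p₀ * (1 - γ) + γ) * (p₁ * (1 - γ) + γ)) / ((p₀' * (1 - γ) + γ) * (p₁' * (1 - γ) + γ)) := by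
        rw [le_div_iff₀ (by positivity)]; exact key
    _ = Real.exp (3 * ε₁) * (γ * p' / ((p₀' * (1 - γ) + γ) * (p₁' * (1 - γ) + γ))) * ((p₀ * (1 - γ) + γ) * (p₁ * (1 - γ) + γ)) := by ring
end

section
/- Fix ε > 0, α > 0, and integer K ≥ 2. Suppose there exist Bernoulli mechanisms M₁,...,M_K with success probabilities pᵢ(D₀) = 1/(2K^{0.5}) and pᵢ(D_j) = 1 - 1/(2K^α) if i = j, else 1/(2K^{1+α}), where D₀ is at Hamming distance Δ = ⌈(0.5+α)ln K / ε⌉ from each D_j, and each Mᵢ is ε-DP along these paths. If a selection algorithm M is ε̂-DP and outputs index j on dataset D_j with probability at least K^{-α} for each j ∈ [K], then ε̂ ≥ (1-α)ln K / ⌈(0.5+α)ln K / ε⌉; in particular for K large enough, ε̂ ≥ 2(1-3α)ε. -/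
/-!
Pigeonhole: since `∑ⱼ P₀ j ≤ 1`, some output `j` has `P₀ j ≤ 1/K`, while group privacy along the
path `D_j → D₀` and usefulness give `P₀ j ≥ e^{-Δε̂} K^{-α}`. Comparing, `e^{-Δε̂} ≤ K^{α-1}`,
i.e. `Δε̂ ≥ (1-α) ln K`. For the asymptotic form, `Δ ≤ (0.5+α) ln K / ε + 1`, and the `+1` costs
at most `6α² ln K` once `ln K ≥ ε / (3α²)`.
-/

open Filter Real

theorem Finset.exists_le_div_card_of_sum_le {ι : Type*} [Fintype ι] [Nonempty ι]
    {f : ι → ℝ} {c : ℝ} (h : ∑ i, f i ≤ c) : ∃ i, f i ≤ c / Fintype.card ι := by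
  have hcard : (0 : ℝ) < Fintype.card ι := by exact_mod_cast Fintype.card_pos
  obtain ⟨i, -, hi⟩ := Finset.exists_le_of_sum_le (f := f) (g := fun _ ↦ c / Fintype.card ι)
    Finset.univ_nonempty (by simpa [mul_div_cancel₀ c hcard.ne'] using h)
  exact ⟨i, hi⟩

theorem le_mul_of_exp_neg_mul_rpow_neg_le_inv {K Δ εhat α : ℝ} (hK : 0 < K)
    (h : exp (-(Δ * εhat)) * K ^ (-α) ≤ K⁻¹) : (1 - α) * log K ≤ Δ * εhat := by
  rw [rpow_def_of_pos hK, ← exp_add, ← exp_log hK, ← exp_neg, log_exp, exp_le_exp] at h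
  linarith

theorem div_le_of_sum_le_one_of_exp_neg_mul_le {K : ℕ} (hK : 0 < K) {Δ εhat α : ℝ} (hΔ : 0 < Δ)
    {P₀ Pj : Fin K → ℝ} (hsum : ∑ j, P₀ j ≤ 1)
    (hpath : ∀ j, exp (-(Δ * εhat)) * Pj j ≤ P₀ j) (hutil : ∀ j, (K : ℝ) ^ (-α) ≤ Pj j) :
    (1 - α) * log K / Δ ≤ εhat := by
  have : NeZero K := ⟨hK.ne'⟩
  obtain ⟨j, hj⟩ := Finset.exists_le_div_card_of_sum_le hsum
  rw [Fintype.card_fin, one_div] at hj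
  rw [div_le_iff₀ hΔ, mul_comm εhat]
  refine le_mul_of_exp_neg_mul_rpow_neg_le_inv (by exact_mod_cast hK) ?_
  calc exp (-(Δ * εhat)) * (K : ℝ) ^ (-α) ≤ exp (-(Δ * εhat)) * Pj j := by gcongr; exact hutil j
    _ ≤ P₀ j := hpath j
    _ ≤ (K : ℝ)⁻¹ := hj

theorem two_mul_one_sub_three_mul_mul_le_div_ceil {ε α L : ℝ} (hε : 0 < ε) (hα : 0 < α)
    (hL : ε / (3 * α ^ 2) ≤ L) :
    2 * (1 - 3 * α) * ε ≤ (1 - α) * L / (⌈(0.5 + α) * L / ε⌉₊ : ℝ) := by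
  have hL' : ε ≤ 3 * α ^ 2 * L := by rwa [div_le_iff₀' (by positivity)] at hL
  have hLpos : 0 < L := lt_of_lt_of_le (by positivity) hL
  set D : ℕ := ⌈(0.5 + α) * L / ε⌉₊
  have hD : 0 < (D : ℝ) := by simp only [D, Nat.cast_pos, Nat.ceil_pos]; positivity
  have hD_ge : (0.5 + α) * L ≤ ε * D := by
    rw [← div_le_iff₀' hε]; exact Nat.le_ceil _
  have hD_le : ε * D ≤ (0.5 + α) * L + ε := by
    have := (Nat.ceil_lt_add_one (show 0 ≤ (0.5 + α) * L / ε by positivity)).le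
    rw [← le_div_iff₀' hε, add_div, div_self hε.ne']; exact this
  rw [le_div_iff₀ hD]
  -- `2(1 - 3α)(0.5 + α) = (1 - α) - 6α²`
  rcases le_or_gt (1 - 3 * α) 0 with hα3 | hα3
  · nlinarith [mul_le_mul_of_nonpos_left hD_ge (by linarith : 2 * (1 - 3 * α) ≤ 0)]
  · nlinarith [mul_le_mul_of_nonneg_left hD_le (by linarith : 0 ≤ 2 * (1 - 3 * α))]

theorem eventually_two_mul_one_sub_three_mul_mul_le_div_ceil {ε α : ℝ} (hε : 0 < ε)
    (hα : 0 < α) : ∀ᶠ K : ℕ in atTop,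
      2 * (1 - 3 * α) * ε ≤ (1 - α) * log K / (⌈(0.5 + α) * log K / ε⌉₊ : ℝ) :=
  ((tendsto_log_atTop.comp tendsto_natCast_atTop_atTop).eventually_ge_atTop
    (ε / (3 * α ^ 2))).mono fun _ ↦ two_mul_one_sub_three_mul_mul_le_div_ceil hε hα

theorem stmt17_general (ε α : ℝ) (hε : 0 < ε) (hα : 0 < α) (K : ℕ) (hK : 2 ≤ K)
    (εhat : ℝ)
    (Δ : ℕ) (hΔ : Δ = ⌈(0.5 + α) * Real.log K / ε⌉₊)
    (P₀ Pj : Fin K → ℝ)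
    (hsum : ∑ j, P₀ j ≤ 1)
    (hpath : ∀ j, Real.exp (-((Δ : ℝ) * εhat)) * Pj j ≤ P₀ j)
    (hutil : ∀ j, (K : ℝ) ^ (-α) ≤ Pj j) :
    (1 - α) * Real.log K / (Δ : ℝ) ≤ εhat ∧
    ∃ K₀ : ℕ, ∀ K' : ℕ, K₀ ≤ K' →
      2 * (1 - 3 * α) * ε ≤
        (1 - α) * Real.log K' / ((⌈(0.5 + α) * Real.log K' / ε⌉₊ : ℕ) : ℝ) := by
  have hlogK : 0 < log K := log_pos (by exact_mod_cast hK)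
  have hΔpos : (0 : ℝ) < Δ := by
    rw [hΔ, Nat.cast_pos, Nat.ceil_pos]; positivity
  exact ⟨div_le_of_sum_le_one_of_exp_neg_mul_le (by omega) hΔpos hsum hpath hutil,
    eventually_atTop.mp (eventually_two_mul_one_sub_three_mul_mul_le_div_ceil hε hα)⟩

/-- Packing lower bound.  Fix `ε > 0`, `α > 0`, `K ≥ 2`, and let
`Δ = ⌈(0.5+α)·ln K / ε⌉`.  Suppose (as realized by the Bernoulli mechanisms with
`pᵢ(D₀) = 1/(2K^{0.5})`, `pᵢ(D_j) = 1 - 1/(2K^α)` for `i = j` and `1/(2K^{1+α})`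
otherwise, which are `ε`-DP at Hamming distance `Δ`) that an `ε̂`-DP selection
algorithm has output probabilities `P₀ j = Pr[M(D₀) = j]` and `Pj j = Pr[M(D_j) = j]`
satisfying `∑_j P₀ j ≤ 1`, the group-privacy bound
`e^{-Δε̂}·Pj j ≤ P₀ j` for all `j`, and the weak-usefulness bound `Pj j ≥ K^{-α}`.
Then `ε̂ ≥ (1-α)·ln K / Δ`; and in particular, for all large enough `K`,
`(1-α)·ln K / ⌈(0.5+α)·ln K / ε⌉ ≥ 2(1-3α)ε`, hence `ε̂ ≥ 2(1-3α)ε`. -/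
theorem stmt17 (ε α : ℝ) (hε : 0 < ε) (hα : 0 < α) (K : ℕ) (hK : 2 ≤ K)
    (εhat : ℝ)
    (Δ : ℕ) (hΔ : Δ = ⌈(0.5 + α) * Real.log K / ε⌉₊)
    (P₀ Pj : Fin K → ℝ)
    (hP₀nn : ∀ j, 0 ≤ P₀ j) (hsum : ∑ j, P₀ j ≤ 1)
    (hpath : ∀ j, Real.exp (-((Δ : ℝ) * εhat)) * Pj j ≤ P₀ j)
    (hutil : ∀ j, (K : ℝ) ^ (-α) ≤ Pj j) :
    (1 - α) * Real.log K / (Δ : ℝ) ≤ εhat ∧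
    ∃ K₀ : ℕ, ∀ K' : ℕ, K₀ ≤ K' →
      2 * (1 - 3 * α) * ε ≤
        (1 - α) * Real.log K' / ((⌈(0.5 + α) * Real.log K' / ε⌉₊ : ℕ) : ℝ) :=
  stmt17_general ε α hε hα K hK εhat Δ hΔ P₀ Pj hsum hpath hutil
end

section
/- Fix τ ∈ ℝ, γ, ε₂ > 0, and let q₁,...,q_N be independent real random variables with q̃ᵢ = min{τ, qᵢ} and p = (1/N)∑ᵢ E[exp(ε₂(q̃ᵢ - τ))]. Consider the exponential mechanism on the N+1+⌈1/γ⌉ scores A₁,...,A_n where Aᵢ = q̃ᵢ for i ≤ N and Aᵢ = τ otherwise (outputting index i with probability proportional to exp(ε₂Aᵢ)). Then for any δ ∈ (0,1), Pr[output score < τ - (1/ε₂)ln(1/(δp))] ≤ δ. -/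
/-!
Pointwise, the mechanism puts mass at most `N e^{ε₂ T}` on scores below `T`, while the dummy
score `τ` (there is at least one) makes the total mass at least `e^{ε₂ τ} (1 + S)` with
`S = ∑ᵢ exp (ε₂ (q̃ᵢ - τ))`. As `e^{ε₂ (T - τ)} = δ p`, the failure probability is at most
`N δ p · E[(1 + S)⁻¹]`.

For independent `[0,1]`-valued `Yᵢ` with sum `S`, write `(1 + S)⁻¹ = ∫₀¹ t^S dt`. Independence
factors `E[t^S]`, and Bernoulli's inequality `t^y ≤ 1 + (t - 1) y` bounds each factor by
`exp ((t - 1) E[Yᵢ])`, so `E[(1 + S)⁻¹] ≤ ∫₀¹ e^{(t - 1) E[S]} dt ≤ 1 / E[S] = 1 / (N p)`.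
-/

open MeasureTheory ProbabilityTheory Real Set

lemma inv_one_add_eq_setIntegral_rpow {s : ℝ} (hs : -1 < s) :
    (1 + s)⁻¹ = ∫ t in Ioc (0 : ℝ) 1, t ^ s := by
  rw [← intervalIntegral.integral_of_le zero_le_one, integral_rpow (Or.inl hs), one_rpow,
    zero_rpow (by linarith), sub_zero, one_div, add_comm]

lemma setIntegral_exp_sub_one_mul_le {P : ℝ} (hP : 0 < P) :
    ∫ t in Ioc (0 : ℝ) 1, exp ((t - 1) * P) ≤ P⁻¹ := by
  have hderiv : ∀ t, HasDerivAt (fun t => exp ((t - 1) * P) / P) (exp ((t - 1) * P)) t := by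
    intro t
    have h := (((hasDerivAt_id' t).sub_const 1).mul_const P).exp.div_const P
    rwa [one_mul, mul_div_assoc, div_self hP.ne', mul_one] at h
  rw [← intervalIntegral.integral_of_le zero_le_one,
    intervalIntegral.integral_eq_sub_of_hasDerivAt (fun t _ => hderiv t)
      ((by fun_prop : Continuous fun t => exp ((t - 1) * P)).intervalIntegrable _ _)]
  have : 0 < exp ((0 - 1) * P) / P := by positivity
  simp only [sub_self, zero_mul, exp_zero, one_div] at this ⊢
  linarith

section InverseExpectation

variable {Ω ι : Type*} [MeasurableSpace Ω] {μ : Measure Ω} [IsProbabilityMeasure μ]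

lemma integral_rpow_le_one_add_mul_integral {Y : Ω → ℝ} (hY : Measurable Y)
    (h0 : ∀ ω, 0 ≤ Y ω) (h1 : ∀ ω, Y ω ≤ 1) {t : ℝ} (ht0 : 0 < t) :
    ∫ ω, t ^ Y ω ∂μ ≤ 1 + (t - 1) * μ[Y] := by
  have hYint : Integrable Y μ :=
    .of_bound hY.aestronglyMeasurable 1 (.of_forall fun ω => by
      rw [norm_of_nonneg (h0 ω)]; exact h1 ω)
  have hbernoulli : ∀ ω, t ^ Y ω ≤ 1 + (t - 1) * Y ω := fun ω => by
    have := rpow_one_add_le_one_add_mul_self (s := t - 1) (by linarith) (h0 ω) (h1 ω)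
    rw [add_sub_cancel] at this
    linarith
  calc ∫ ω, t ^ Y ω ∂μ ≤ ∫ ω, 1 + (t - 1) * Y ω ∂μ :=
        integral_mono_of_nonneg (.of_forall fun ω => rpow_nonneg ht0.le _)
          ((integrable_const 1).add (hYint.const_mul _)) (.of_forall hbernoulli)
    _ = 1 + (t - 1) * μ[Y] := by
        rw [integral_add (integrable_const 1) (hYint.const_mul _), integral_const_mul]
        simp

variable [Fintype ι] {Y : ι → Ω → ℝ}

lemma integral_rpow_sum_le (hY : ∀ i, Measurable (Y i)) (hindep : iIndepFun Y μ)
    (h0 : ∀ i ω, 0 ≤ Y i ω) (h1 : ∀ i ω, Y i ω ≤ 1) {t : ℝ} (ht0 : 0 < t) :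
    ∫ ω, t ^ (∑ i, Y i ω) ∂μ ≤ exp ((t - 1) * ∑ i, μ[Y i]) := by
  calc ∫ ω, t ^ (∑ i, Y i ω) ∂μ = ∏ i, ∫ ω, t ^ Y i ω ∂μ := by
        simp_rw [rpow_sum_of_pos ht0]
        exact hindep.integral_fun_prod_comp (f := fun _ y => t ^ y)
          (fun i => (hY i).aemeasurable) (fun _ => by fun_prop)
    _ ≤ ∏ i, exp ((t - 1) * μ[Y i]) := by
        refine Finset.prod_le_prod (fun i _ => integral_nonneg fun ω => rpow_nonneg ht0.le _)
          fun i _ => ?_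
        calc ∫ ω, t ^ Y i ω ∂μ ≤ 1 + (t - 1) * μ[Y i] :=
              integral_rpow_le_one_add_mul_integral (hY i) (h0 i) (h1 i) ht0
          _ ≤ exp ((t - 1) * μ[Y i]) := by linarith [add_one_le_exp ((t - 1) * μ[Y i])]
    _ = exp ((t - 1) * ∑ i, μ[Y i]) := by rw [← exp_sum, Finset.mul_sum]

theorem integral_inv_one_add_sum_le (hY : ∀ i, Measurable (Y i)) (hindep : iIndepFun Y μ)
    (h0 : ∀ i ω, 0 ≤ Y i ω) (h1 : ∀ i ω, Y i ω ≤ 1) (hP : 0 < ∑ i, μ[Y i]) :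
    ∫ ω, (1 + ∑ i, Y i ω)⁻¹ ∂μ ≤ (∑ i, μ[Y i])⁻¹ := by
  set S : Ω → ℝ := fun ω => ∑ i, Y i ω
  have hS0 : ∀ ω, 0 ≤ S ω := fun ω => Finset.sum_nonneg fun i _ => h0 i ω
  have hSm : Measurable S := Finset.measurable_fun_sum _ fun i _ => hY i
  have hF : Integrable (fun z : Ω × ℝ => z.2 ^ S z.1) (μ.prod (volume.restrict (Ioc 0 1))) := by
    refine .of_bound (measurable_snd.pow (hSm.comp measurable_fst)).aestronglyMeasurable 1 ?_
    filter_upwards [Measure.quasiMeasurePreserving_snd.ae (ae_restrict_mem measurableSet_Ioc)]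
      with z hz
    rw [norm_of_nonneg (rpow_nonneg hz.1.le _)]
    exact rpow_le_one hz.1.le hz.2 (hS0 z.1)
  calc ∫ ω, (1 + S ω)⁻¹ ∂μ = ∫ ω, (∫ t in Ioc (0 : ℝ) 1, t ^ S ω) ∂μ := by
        congr with ω
        exact inv_one_add_eq_setIntegral_rpow (by linarith [hS0 ω])
    _ = ∫ t in Ioc 0 1, ∫ ω, t ^ S ω ∂μ := integral_integral_swap hF
    _ ≤ ∫ t in Ioc 0 1, exp ((t - 1) * ∑ i, μ[Y i]) :=
        setIntegral_mono_on hF.integral_prod_right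
          (by fun_prop : Continuous fun t : ℝ => exp ((t - 1) * ∑ i, μ[Y i])).integrableOn_Ioc
          measurableSet_Ioc fun t ht => integral_rpow_sum_le hY hindep h0 h1 ht.1
    _ ≤ (∑ i, μ[Y i])⁻¹ := setIntegral_exp_sub_one_mul_le hP

end InverseExpectation

lemma exp_mul_min_sub_le_one {ε : ℝ} (hε : 0 ≤ ε) (τ x : ℝ) : exp (ε * (min τ x - τ)) ≤ 1 :=
  exp_le_one_iff.2 (mul_nonpos_of_nonneg_of_nonpos hε (sub_nonpos.2 (min_le_left _ _)))

lemma integral_exp_mul_min_sub_mem_Ioc {Ω : Type*} [MeasurableSpace Ω] {μ : Measure Ω}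
    [IsProbabilityMeasure μ] {X : Ω → ℝ} (hX : Measurable X) {ε : ℝ} (hε : 0 ≤ ε) (τ : ℝ) :
    ∫ ω, exp (ε * (min τ (X ω) - τ)) ∂μ ∈ Ioc 0 1 := by
  have hint : Integrable (fun ω => exp (ε * (min τ (X ω) - τ))) μ :=
    .of_bound (by fun_prop) 1 (.of_forall fun ω => by
      rw [norm_of_nonneg (exp_pos _).le]; exact exp_mul_min_sub_le_one hε τ (X ω))
  exact ⟨integral_exp_pos hint, (integral_mono hint (integrable_const 1)
    fun ω => exp_mul_min_sub_le_one hε τ (X ω)).trans_eq (by simp)⟩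

lemma integral_inv_one_add_sum_exp_mul_min_sub_le {Ω ι : Type*} [MeasurableSpace Ω]
    {μ : Measure Ω} [IsProbabilityMeasure μ] [Fintype ι] [Nonempty ι] {X : ι → Ω → ℝ}
    (hX : ∀ i, Measurable (X i)) (hindep : iIndepFun X μ) {ε : ℝ} (hε : 0 ≤ ε) (τ : ℝ) :
    ∫ ω, (1 + ∑ i, exp (ε * (min τ (X i ω) - τ)))⁻¹ ∂μ
      ≤ (∑ i, ∫ ω, exp (ε * (min τ (X i ω) - τ)) ∂μ)⁻¹ :=
  integral_inv_one_add_sum_le (fun i => by fun_prop)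
    (hindep.comp (fun _ x => exp (ε * (min τ x - τ))) fun _ => by fun_prop)
    (fun i ω => (exp_pos _).le) (fun i ω => exp_mul_min_sub_le_one hε τ (X i ω))
    (Finset.sum_pos (fun i _ => (integral_exp_mul_min_sub_mem_Ioc (hX i) hε τ).1)
      Finset.univ_nonempty)

lemma integrable_inv_one_add {Ω : Type*} [MeasurableSpace Ω] {μ : Measure Ω}
    [IsFiniteMeasure μ] {f : Ω → ℝ} (hf : Measurable f) (h0 : ∀ ω, 0 ≤ f ω) :
    Integrable (fun ω => (1 + f ω)⁻¹) μ :=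
  .of_bound (by fun_prop) 1 (.of_forall fun ω => by
    rw [norm_of_nonneg (inv_nonneg.2 (by linarith [h0 ω]))]
    exact inv_le_one_of_one_le₀ (by linarith [h0 ω]))

lemma one_div_mul_sum_mem_Ioc {N : ℕ} (hN : 1 ≤ N) {x : Fin N → ℝ} (hx : ∀ i, x i ∈ Ioc 0 1) :
    1 / (N : ℝ) * ∑ i, x i ∈ Ioc 0 1 := by
  have : Nonempty (Fin N) := ⟨⟨0, hN⟩⟩
  have hN' : (0 : ℝ) < N := by exact_mod_cast hN
  have hsum : ∑ i, x i ≤ N := (Finset.sum_le_sum fun i _ => (hx i).2).trans_eq (by simp)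
  refine ⟨by have := Finset.sum_pos (fun i _ => (hx i).1) Finset.univ_nonempty; positivity, ?_⟩
  rw [div_mul_eq_mul_div, one_mul, div_le_one hN']
  exact hsum

lemma exp_mul_sub_log_one_div {ε c : ℝ} (hε : ε ≠ 0) (hc : 0 < c) (τ : ℝ) :
    exp (ε * (τ - 1 / ε * log (1 / c) - τ)) = c := by
  rw [show ε * (τ - 1 / ε * log (1 / c) - τ) = log c by
    rw [one_div c, log_inv]; field_simp; ring, exp_log hc]

lemma sub_mul_log_one_div_le {ε c : ℝ} (hε : 0 ≤ ε) (hc0 : 0 < c) (hc1 : c ≤ 1) (τ : ℝ) :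
    τ - 1 / ε * log (1 / c) ≤ τ := by
  have : 0 ≤ 1 / ε * log (1 / c) := mul_nonneg (by positivity) (log_nonneg (by
    rw [le_div_iff₀ hc0]; linarith))
  linarith

lemma tail_weight_div_total_weight_le {ι κ : Type*} [Fintype ι] [Fintype κ] [Nonempty κ]
    {ε τ T : ℝ} (hε : 0 ≤ ε) (hT : T ≤ τ) (A : ι ⊕ κ → ℝ) (hA : ∀ j, A (Sum.inr j) = τ) :
    (∑ i, if A i < T then exp (ε * A i) else 0) / ∑ i, exp (ε * A i)
      ≤ Fintype.card ι * exp (ε * (T - τ)) * (1 + ∑ i, exp (ε * (A (Sum.inl i) - τ)))⁻¹ := by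
  set S := ∑ i, exp (ε * (A (Sum.inl i) - τ))
  have hS : 0 ≤ S := by positivity
  have hnum : (∑ i, if A i < T then exp (ε * A i) else 0) ≤ Fintype.card ι * exp (ε * T) := by
    rw [Fintype.sum_sum_type]
    simp only [hA, hT.not_gt, if_false, Finset.sum_const_zero, add_zero]
    calc _ ≤ ∑ _i : ι, exp (ε * T) := Finset.sum_le_sum fun i _ => by
          split_ifs with h
          · exact exp_le_exp.2 (mul_le_mul_of_nonneg_left h.le hε)
          · positivity
      _ = _ := by simp
  have hden : exp (ε * τ) * (1 + S) ≤ ∑ i, exp (ε * A i) := by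
    have hinl : ∑ i, exp (ε * A (Sum.inl i)) = exp (ε * τ) * S := by
      rw [Finset.mul_sum]; congr with i; rw [← exp_add]; ring_nf
    have hκ : (1 : ℝ) ≤ Fintype.card κ := by exact_mod_cast Fintype.card_pos
    rw [Fintype.sum_sum_type, hinl]
    simp only [hA, Finset.sum_const, Finset.card_univ, nsmul_eq_mul]
    nlinarith [exp_pos (ε * τ)]
  calc _ ≤ Fintype.card ι * exp (ε * T) / (exp (ε * τ) * (1 + S)) :=
        div_le_div₀ (by positivity) hnum (by positivity) hden
    _ = _ := by rw [mul_sub, exp_sub]; field_simp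

theorem stmt18_general {Ω : Type*} [MeasurableSpace Ω] (μ : Measure Ω) [IsProbabilityMeasure μ]
    (N m : ℕ) (hN : 1 ≤ N) (γ ε₂ τ δ : ℝ)
    (hε₂ : 0 < ε₂) (hδ : δ ∈ Set.Ioo (0 : ℝ) 1)
    (hm : m = 1 + ⌈1 / γ⌉₊)
    (q : Fin N → Ω → ℝ) (hmeas : ∀ i, Measurable (q i))
    (hindep : iIndepFun q μ)
    (p : ℝ)
    (hp : p = (1 / (N : ℝ)) * ∑ i, ∫ ω, Real.exp (ε₂ * (min τ (q i ω) - τ)) ∂μ)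
    (A : (Fin N ⊕ Fin m) → Ω → ℝ)
    (hA : ∀ i ω, A (Sum.inl i) ω = min τ (q i ω))
    (hA' : ∀ j ω, A (Sum.inr j) ω = τ) :
    (∫ ω, (∑ i : Fin N ⊕ Fin m,
        if A i ω < τ - (1 / ε₂) * Real.log (1 / (δ * p)) then Real.exp (ε₂ * A i ω)
        else 0) / (∑ i : Fin N ⊕ Fin m, Real.exp (ε₂ * A i ω)) ∂μ) ≤ δ := by
  obtain ⟨hδ0, hδ1⟩ := hδ
  have : Nonempty (Fin N) := ⟨⟨0, hN⟩⟩
  have : Nonempty (Fin m) := ⟨⟨0, by omega⟩⟩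
  obtain ⟨hp0, hp1⟩ : p ∈ Ioc 0 1 := hp ▸ one_div_mul_sum_mem_Ioc hN
    fun i => integral_exp_mul_min_sub_mem_Ioc (hmeas i) hε₂.le τ
  have hsum : ∑ i, ∫ ω, exp (ε₂ * (min τ (q i ω) - τ)) ∂μ = N * p := by rw [hp]; field_simp
  set T := τ - (1 / ε₂) * log (1 / (δ * p))
  have hTτ : T ≤ τ := sub_mul_log_one_div_le hε₂.le (by positivity) (by nlinarith) τ
  have hT : exp (ε₂ * (T - τ)) = δ * p := exp_mul_sub_log_one_div hε₂.ne' (by positivity) τ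
  have hratio : ∀ ω, (∑ i, if A i ω < T then exp (ε₂ * A i ω) else 0) / ∑ i, exp (ε₂ * A i ω)
      ≤ N * (δ * p) * (1 + ∑ i, exp (ε₂ * (min τ (q i ω) - τ)))⁻¹ := fun ω => by
    simpa only [Fintype.card_fin, hT, hA] using
      tail_weight_div_total_weight_le hε₂.le hTτ (A · ω) (hA' · ω)
  calc _ ≤ ∫ ω, N * (δ * p) * (1 + ∑ i, exp (ε₂ * (min τ (q i ω) - τ)))⁻¹ ∂μ :=
        integral_mono_of_nonneg (.of_forall fun ω => div_nonneg
            (Finset.sum_nonneg fun i _ => by split_ifs <;> positivity)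
            (Finset.sum_nonneg fun i _ => (exp_pos _).le))
          ((integrable_inv_one_add (by fun_prop)
            fun ω => Finset.sum_nonneg fun i _ => (exp_pos _).le).const_mul _)
          (.of_forall hratio)
    _ = N * (δ * p) * ∫ ω, (1 + ∑ i, exp (ε₂ * (min τ (q i ω) - τ)))⁻¹ ∂μ :=
        integral_const_mul _ _
    _ ≤ N * (δ * p) * (N * p)⁻¹ := by
        grw [integral_inv_one_add_sum_exp_mul_min_sub_le hmeas hindep hε₂.le τ, hsum]
    _ = δ := by field_simp

/-- Utility of the padded exponential mechanism.  Fix `τ ∈ ℝ`, `γ, ε₂ > 0`, and let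
`q₁, …, q_N` be independent real random variables, `q̃ᵢ = min {τ, qᵢ}`, and
`p = (1/N)·∑ᵢ E[exp(ε₂(q̃ᵢ - τ))]`.  Run the exponential mechanism on the
`n = N + 1 + ⌈1/γ⌉` scores `Aᵢ` with `Aᵢ = q̃ᵢ` for `i ≤ N` and `Aᵢ = τ` for the
dummy indices, selecting index `i` with probability proportional to `exp(ε₂ Aᵢ)`.
Then for any `δ ∈ (0,1)`, the probability (over both the `qᵢ` and the mechanism's
selection) that the output score is below `τ - (1/ε₂)·ln(1/(δp))` is at most `δ`. -/
theorem stmt18 {Ω : Type*} [MeasurableSpace Ω] (μ : Measure Ω) [IsProbabilityMeasure μ]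
    (N m : ℕ) (hN : 1 ≤ N) (γ ε₂ τ δ : ℝ)
    (hγ : 0 < γ) (hε₂ : 0 < ε₂) (hδ : δ ∈ Set.Ioo (0 : ℝ) 1)
    (hm : m = 1 + ⌈1 / γ⌉₊)
    (q : Fin N → Ω → ℝ) (hmeas : ∀ i, Measurable (q i))
    (hindep : iIndepFun q μ)
    (p : ℝ)
    (hp : p = (1 / (N : ℝ)) * ∑ i, ∫ ω, Real.exp (ε₂ * (min τ (q i ω) - τ)) ∂μ)
    (A : (Fin N ⊕ Fin m) → Ω → ℝ)
    (hA : ∀ i ω, A (Sum.inl i) ω = min τ (q i ω))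
    (hA' : ∀ j ω, A (Sum.inr j) ω = τ) :
    (∫ ω, (∑ i : Fin N ⊕ Fin m,
        if A i ω < τ - (1 / ε₂) * Real.log (1 / (δ * p)) then Real.exp (ε₂ * A i ω)
        else 0) / (∑ i : Fin N ⊕ Fin m, Real.exp (ε₂ * A i ω)) ∂μ) ≤ δ :=
  stmt18_general μ N m hN γ ε₂ τ δ hε₂ hδ hm q hmeas hindep p hp A hA hA'
end
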